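/- With I(G,K) the CA-ML instance constructed from a bipartite graph G and integer K as described, G has a maximal matching of size at most K if and only if I(G,K) admits a course-complete first-coalition-stable matching; moreover, the same equivalence holds with coalition-stable in place of first-coalition-stable. -/
import Mathlib

open Finset

/-- An instance of the Course Allocation problem: students `S`, courses `C`,
mutual acceptability `acc`, strict preferences of students over (acceptable) courses
and of courses over (acceptable) students, positive credits, upper quotas and credit limits. -/
structure CA (S C : Type*) where
  acc : S → C → Prop
  sPref : S → C → C → Prop
  cPref : C → S → S → Prop
  credits : C → ℚ
  quota : C → ℕ
  limit : S → ℚ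
  credits_pos : ∀ c, 0 < credits c
  sPref_irrefl : ∀ s c, ¬ sPref s c c
  sPref_trans : ∀ s c₁ c₂ c₃, sPref s c₁ c₂ → sPref s c₂ c₃ → sPref s c₁ c₃
  sPref_total : ∀ s c₁ c₂, acc s c₁ → acc s c₂ → c₁ ≠ c₂ → sPref s c₁ c₂ ∨ sPref s c₂ c₁
  cPref_irrefl : ∀ c s, ¬ cPref c s s
  cPref_trans : ∀ c s₁ s₂ s₃, cPref c s₁ s₂ → cPref c s₂ s₃ → cPref c s₁ s₃
  cPref_total : ∀ c s₁ s₂, acc s₁ c → acc s₂ c → s₁ ≠ s₂ → cPref c s₁ s₂ ∨ cPref c s₂ s₁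

section CourseAllocation

variable {S C : Type*} [DecidableEq S] [DecidableEq C]

/-- The set `C_M(s)` of courses assigned to student `s` in assignment `M`. -/
def CM (M : Finset (S × C)) (s : S) : Finset C :=
  (M.filter fun p => p.1 = s).image Prod.snd

/-- The set `S_M(c)` of students assigned to course `c` in assignment `M`. -/
def SM (M : Finset (S × C)) (c : C) : Finset S :=
  (M.filter fun p => p.2 = c).image Prod.fst

/-- The total number of credits `O(D)` of a set of courses `D`. -/
def CA.O (I : CA S C) (D : Finset C) : ℚ := ∑ c ∈ D, I.credits c

/-- `M` is a matching: all pairs acceptable, credit limits and upper quotas respected. -/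
def CA.IsMatching (I : CA S C) (M : Finset (S × C)) : Prop :=
  (∀ p ∈ M, I.acc p.1 p.2) ∧
  (∀ s, I.O (CM M s) ≤ I.limit s) ∧
  (∀ c, (SM M c).card ≤ I.quota c)

/-- Feasibility of a matching with respect to families `F` of feasible course sets. -/
def Feasible (F : S → Set (Finset C)) (M : Finset (S × C)) : Prop :=
  ∀ s, CM M s ∈ F s

/-- `F` is a family of downward-feasible constraints: every feasible set consists of
acceptable courses, and subsets of feasible sets are feasible. -/
def CA.DownwardFeasible (I : CA S C) (F : S → Set (Finset C)) : Prop :=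
  (∀ s, ∀ D ∈ F s, ∀ c ∈ D, I.acc s c) ∧
  (∀ s, ∀ D ∈ F s, ∀ D' ⊆ D, D' ∈ F s)

/-- Absent downward-feasible constraints (every set of courses feasible). -/
def noF : S → Set (Finset C) := fun _ => Set.univ

/-- Condition (1) of all blocking definitions: course `c` is undersubscribed in `M`
or prefers `s` to one of its assigned students. -/
def CA.Wants (I : CA S C) (M : Finset (S × C)) (s : S) (c : C) : Prop :=
  (SM M c).card < I.quota c ∨ ∃ s' ∈ SM M c, I.cPref c s s'

/-- `(s, c)` is a blocking pair of `M` (w.r.t. feasibility constraints `F`). -/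
def CA.BlockingPair (I : CA S C) (F : S → Set (Finset C)) (M : Finset (S × C))
    (s : S) (c : C) : Prop :=
  I.acc s c ∧ (s, c) ∉ M ∧ I.Wants M s c ∧
  ∃ D ⊆ CM M s, (∀ c' ∈ D, I.sPref s c c') ∧
    I.O (CM M s) - I.O D + I.credits c ≤ I.limit s ∧
    (CM M s \ D) ∪ {c} ∈ F s

def CA.PairStable (I : CA S C) (F : S → Set (Finset C)) (M : Finset (S × C)) : Prop :=
  ∀ s c, ¬ I.BlockingPair F M s c

/-- `(s, c)` is a size-blocking pair of `M`: like a blocking pair, but additionally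
the dropped set `D` must satisfy `O(D) ≤ O(c)`. -/
def CA.SizeBlockingPair (I : CA S C) (F : S → Set (Finset C)) (M : Finset (S × C))
    (s : S) (c : C) : Prop :=
  I.acc s c ∧ (s, c) ∉ M ∧ I.Wants M s c ∧
  ∃ D ⊆ CM M s, (∀ c' ∈ D, I.sPref s c c') ∧ I.O D ≤ I.credits c ∧
    I.O (CM M s) - I.O D + I.credits c ≤ I.limit s ∧
    (CM M s \ D) ∪ {c} ∈ F s

def CA.PairSizeStable (I : CA S C) (F : S → Set (Finset C)) (M : Finset (S × C)) : Prop :=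
  ∀ s c, ¬ I.SizeBlockingPair F M s c

/-- `(s, B)` is a blocking coalition of `M`. -/
def CA.BlockingCoalition (I : CA S C) (F : S → Set (Finset C)) (M : Finset (S × C))
    (s : S) (B : Finset C) : Prop :=
  B.Nonempty ∧ (∀ c ∈ B, I.acc s c ∧ (s, c) ∉ M) ∧ (∀ c ∈ B, I.Wants M s c) ∧
  ∃ D ⊆ CM M s, (∀ c ∈ B, ∀ c' ∈ D, I.sPref s c c') ∧ I.O D ≤ I.O B ∧
    I.O (CM M s) - I.O D + I.O B ≤ I.limit s ∧
    (CM M s \ D) ∪ B ∈ F s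

def CA.CoalitionStable (I : CA S C) (F : S → Set (Finset C)) (M : Finset (S × C)) : Prop :=
  ∀ s B, ¬ I.BlockingCoalition F M s B

/-- `(s, B)` is a first-blocking coalition of `M`: as a blocking coalition, except that
`s` need only prefer her most-preferred course of `B` to her most-preferred course of `D`
(equivalently, some course of `B` is preferred to every course of `D`; vacuous if `D = ∅`). -/
def CA.FirstBlockingCoalition (I : CA S C) (F : S → Set (Finset C)) (M : Finset (S × C))
    (s : S) (B : Finset C) : Prop :=
  B.Nonempty ∧ (∀ c ∈ B, I.acc s c ∧ (s, c) ∉ M) ∧ (∀ c ∈ B, I.Wants M s c) ∧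
  ∃ D ⊆ CM M s, (∃ b ∈ B, ∀ c' ∈ D, I.sPref s b c') ∧ I.O D ≤ I.O B ∧
    I.O (CM M s) - I.O D + I.O B ≤ I.limit s ∧
    (CM M s \ D) ∪ B ∈ F s

def CA.FirstCoalitionStable (I : CA S C) (F : S → Set (Finset C)) (M : Finset (S × C)) : Prop :=
  ∀ s B, ¬ I.FirstBlockingCoalition F M s B

/-- Every course exactly fills its upper quota. -/
def CA.CourseComplete (I : CA S C) (M : Finset (S × C)) : Prop :=
  ∀ c, (SM M c).card = I.quota c

/-- Every student takes as many credits as her credit limit. -/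
def CA.StudentComplete (I : CA S C) (M : Finset (S × C)) : Prop :=
  ∀ s, I.O (CM M s) = I.limit s

/-- The size of a matching: total number of credits taken by all students. -/
def CA.size [Fintype S] (I : CA S C) (M : Finset (S × C)) : ℚ :=
  ∑ s : S, I.O (CM M s)

/-- `ml` is a master list of students for the instance `I`: a strict total order on
students with which every course's preferences are consistent. -/
def CA.MasterList (I : CA S C) (ml : S → S → Prop) : Prop :=
  (∀ s, ¬ ml s s) ∧ (∀ s₁ s₂ s₃, ml s₁ s₂ → ml s₂ s₃ → ml s₁ s₃) ∧
  (∀ s₁ s₂, s₁ ≠ s₂ → ml s₁ s₂ ∨ ml s₂ s₁) ∧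
  (∀ c s s', I.acc s c → I.acc s' c → (I.cPref c s s' ↔ ml s s'))

end CourseAllocation
/-- Builds a `CA` instance from rank functions (smaller rank = more preferred), with a fixed
injective tie-breaking that never fires when ranks are distinct on acceptable pairs. -/
def CA.ofRanks {S C : Type*} (acc : S → C → Prop) (srank : S → C → ℕ) (crank : C → S → ℕ)
    (iS : S → ℕ) (iC : C → ℕ) (hiS : Function.Injective iS) (hiC : Function.Injective iC)
    (credits : C → ℚ) (quota : C → ℕ) (limit : S → ℚ) (hpos : ∀ c, 0 < credits c) :
    CA S C where
  acc := acc
  sPref s c c' := acc s c ∧ acc s c' ∧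
    (srank s c < srank s c' ∨ (srank s c = srank s c' ∧ iC c < iC c'))
  cPref c s s' := acc s c ∧ acc s' c ∧
    (crank c s < crank c s' ∨ (crank c s = crank c s' ∧ iS s < iS s'))
  credits := credits
  quota := quota
  limit := limit
  credits_pos := hpos
  sPref_irrefl := by rintro s c ⟨-, -, h⟩; omega
  sPref_trans := by rintro s c₁ c₂ c₃ ⟨h1, -, ha⟩ ⟨-, h2, hb⟩; exact ⟨h1, h2, by omega⟩
  sPref_total := by
    intro s c₁ c₂ h1 h2 hne
    have hi : iC c₁ ≠ iC c₂ := fun h => hne (hiC h)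
    rcases Nat.lt_trichotomy (srank s c₁) (srank s c₂) with h | h | h
    · exact Or.inl ⟨h1, h2, Or.inl h⟩
    · rcases Nat.lt_or_ge (iC c₁) (iC c₂) with h' | h'
      · exact Or.inl ⟨h1, h2, Or.inr ⟨h, h'⟩⟩
      · exact Or.inr ⟨h2, h1, Or.inr ⟨h.symm, by omega⟩⟩
    · exact Or.inr ⟨h2, h1, Or.inl h⟩
  cPref_irrefl := by rintro c s ⟨-, -, h⟩; omega
  cPref_trans := by rintro c s₁ s₂ s₃ ⟨h1, -, ha⟩ ⟨-, h2, hb⟩; exact ⟨h1, h2, by omega⟩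
  cPref_total := by
    intro c s₁ s₂ h1 h2 hne
    have hi : iS s₁ ≠ iS s₂ := fun h => hne (hiS h)
    rcases Nat.lt_trichotomy (crank c s₁) (crank c s₂) with h | h | h
    · exact Or.inl ⟨h1, h2, Or.inl h⟩
    · rcases Nat.lt_or_ge (iS s₁) (iS s₂) with h' | h'
      · exact Or.inl ⟨h1, h2, Or.inr ⟨h, h'⟩⟩
      · exact Or.inr ⟨h2, h1, Or.inr ⟨h.symm, by omega⟩⟩
    · exact Or.inr ⟨h2, h1, Or.inl h⟩
/-- A matching in the bipartite graph `G = (U, W, E)` where `U = Fin n1`, `W = Fin n2`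
and each `w_i ∈ W` has exactly the two neighbours `nb1 i` and `nb2 i`: `f i` is the
`U`-vertex matched to `w_i` (if any); edges must exist and be pairwise disjoint. -/
def GMatching {n1 n2 : ℕ} (nb1 nb2 : Fin n2 → Fin n1)
    (f : Fin n2 → Option (Fin n1)) : Prop :=
  (∀ i j, f i = some j → j = nb1 i ∨ j = nb2 i) ∧
  ∀ i i' j, f i = some j → f i' = some j → i = i'

/-- `f` is a maximal matching of `G`: no edge can be added, i.e. every unmatched
`w_i` has both of its neighbours matched. -/
def GMaximal {n1 n2 : ℕ} (nb1 nb2 : Fin n2 → Fin n1)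
    (f : Fin n2 → Option (Fin n1)) : Prop :=
  GMatching nb1 nb2 f ∧
  ∀ i, f i = none → ∀ j, (j = nb1 i ∨ j = nb2 i) → ∃ i', f i' = some j

/-- The size (number of edges) of the graph matching `f`. -/
def GSize {n1 n2 : ℕ} (f : Fin n2 → Option (Fin n1)) : ℕ :=
  (Finset.univ.filter fun i => f i ≠ none).card
/-- Students of the instance `I16(G,K)`: `Sum.inl (i, t)` is the student `s_i^{t+1}`
(`t : Fin 4`) created for `w_i ∈ W`, and `Sum.inr j` is the student `p_j` for `u_j ∈ U`. -/
abbrev S16 (n1 n2 : ℕ) := (Fin n2 × Fin 4) ⊕ Fin n1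

/-- Courses of `I16(G,K)`: `Sum.inl (i, r)` is `d_i^{r+1}` (`r : Fin 3`),
`Sum.inr (Sum.inl j)` is `c_j`, and `Sum.inr (Sum.inr ())` is the course `e`. -/
abbrev C16 (n1 n2 : ℕ) := (Fin n2 × Fin 3) ⊕ (Fin n1 ⊕ Unit)

/-- Acceptability in `I16(G,K)`, following the preference lists
`s_i^1 : c_{nb1 i} ≻ d_i^1`, `s_i^2 : c_{nb2 i} ≻ d_i^1 ≻ d_i^2`,
`s_i^3 : d_i^2 ≻ d_i^3 ≻ c_{nb1 i} ≻ c_{nb2 i} ≻ e`, `s_i^4 : d_i^3`, `p_j : c_j`. -/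
def acc16 {n1 n2 : ℕ} (nb1 nb2 : Fin n2 → Fin n1) : S16 n1 n2 → C16 n1 n2 → Prop
  | .inl (i, t), .inl (i', r) =>
      i = i' ∧ (if t = 0 then r = 0
        else if t = 1 then r = 0 ∨ r = 1
        else if t = 2 then r = 1 ∨ r = 2
        else r = 2)
  | .inl (i, t), .inr (.inl j) =>
      if t = 0 then j = nb1 i
      else if t = 1 then j = nb2 i
      else if t = 2 then j = nb1 i ∨ j = nb2 i
      else False
  | .inl (_, t), .inr (.inr _) => t = 2
  | .inr j, .inr (.inl j') => j = j'
  | .inr _, _ => False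

/-- Students' preference ranks in `I16(G,K)` (smaller = more preferred). -/
def srank16 {n1 n2 : ℕ} (nb1 nb2 : Fin n2 → Fin n1) : S16 n1 n2 → C16 n1 n2 → ℕ
  | .inl (_, t), .inl (_, r) =>
      if t = 0 then 1
      else if t = 1 then (if r = 0 then 1 else 2)
      else if t = 2 then (if r = 1 then 0 else 1)
      else 0
  | .inl (i, t), .inr (.inl j) => if t = 2 then (if j = nb1 i then 2 else 3) else 0
  | .inl (_, _), .inr (.inr _) => 4
  | .inr _, _ => 0

/-- The position of each student in the master list of students of `I16(G,K)`:
`s_1^1, s_1^2, …, s_{n2}^1, s_{n2}^2`, then `s_1^3, …, s_{n2}^3`, then `p_1, …, p_{n1}`,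
then `s_1^4, …, s_{n2}^4`.  All courses rank their acceptable students accordingly. -/
def mrank16 {n1 n2 : ℕ} : S16 n1 n2 → ℕ
  | .inl (i, t) =>
      if t = 0 then 2 * i.val
      else if t = 1 then 2 * i.val + 1
      else if t = 2 then 2 * n2 + i.val
      else 3 * n2 + n1 + i.val
  | .inr j => 3 * n2 + j.val

/-- Credits in `I16(G,K)`: `d_i^1, d_i^2` and `e` have 2 credits, `d_i^3` and `c_j` one. -/
def credits16 {n1 n2 : ℕ} : C16 n1 n2 → ℚ
  | .inl (_, r) => if r = 2 then 1 else 2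
  | .inr (.inl _) => 1
  | .inr (.inr _) => 2

/-- Upper quotas in `I16(G,K)`: every course has upper quota 1 except `e`,
whose upper quota is `n2 - K`. -/
def quota16 {n1 n2 : ℕ} (K : ℕ) : C16 n1 n2 → ℕ
  | .inl _ => 1
  | .inr (.inl _) => 1
  | .inr (.inr _) => n2 - K

/-- Credit limits in `I16(G,K)`: `s_i^1, s_i^2, s_i^3` have limit 2; `s_i^4`, `p_j` 1. -/
def limit16 {n1 n2 : ℕ} : S16 n1 n2 → ℚ
  | .inl (_, t) => if t = 3 then 1 else 2
  | .inr _ => 1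

/-- The CA-ML instance `I16(G,K)` built from the bipartite graph `G` (given by the
neighbour maps `nb1, nb2` of the degree-2 vertices `W = Fin n2`) and the integer `K`. -/
def I16 {n1 n2 : ℕ} (nb1 nb2 : Fin n2 → Fin n1) (K : ℕ) : CA (S16 n1 n2) (C16 n1 n2) :=
  CA.ofRanks (acc16 nb1 nb2) (srank16 nb1 nb2) (fun _ s => mrank16 s)
    Encodable.encode Encodable.encode Encodable.encode_injective Encodable.encode_injective
    credits16 (quota16 K) limit16
    (by
      rintro (⟨i, r⟩ | j | u)
      · show (0 : ℚ) < (if r = 2 then 1 else 2); split <;> norm_num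
      · show (0 : ℚ) < 1; norm_num
      · show (0 : ℚ) < 2; norm_num)


/-! ### Auxiliary general lemmas -/

section AuxGeneral
open Finset
variable {S C : Type*} [DecidableEq S] [DecidableEq C]

lemma mem_CM {M : Finset (S × C)} {s : S} {c : C} : c ∈ CM M s ↔ (s, c) ∈ M := by
  constructor
  · intro h
    simp only [CM, Finset.mem_image, Finset.mem_filter] at h
    obtain ⟨⟨a, b⟩, ⟨hm, rfl⟩, rfl⟩ := h
    exact hm
  · intro h
    simp only [CM, Finset.mem_image, Finset.mem_filter]
    exact ⟨(s, c), ⟨h, rfl⟩, rfl⟩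

lemma mem_SM {M : Finset (S × C)} {s : S} {c : C} : s ∈ SM M c ↔ (s, c) ∈ M := by
  constructor
  · intro h
    simp only [SM, Finset.mem_image, Finset.mem_filter] at h
    obtain ⟨⟨a, b⟩, ⟨hm, rfl⟩, rfl⟩ := h
    exact hm
  · intro h
    simp only [SM, Finset.mem_image, Finset.mem_filter]
    exact ⟨(s, c), ⟨h, rfl⟩, rfl⟩

lemma CA.O_empty (I : CA S C) : I.O (∅ : Finset C) = 0 := by simp [CA.O]

lemma CA.O_singleton (I : CA S C) (c : C) : I.O {c} = I.credits c := by simp [CA.O]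

lemma CA.O_pair (I : CA S C) {c c' : C} (h : c ≠ c') :
    I.O {c, c'} = I.credits c + I.credits c' := by
  simp [CA.O, Finset.sum_pair h]

lemma CA.O_triple (I : CA S C) {a b c : C} (hab : a ≠ b) (hac : a ≠ c) (hbc : b ≠ c) :
    I.O {a, b, c} = I.credits a + I.credits b + I.credits c := by
  unfold CA.O
  rw [Finset.sum_insert (by simp [hab, hac]), Finset.sum_pair hbc]
  ring

lemma CA.O_mono (I : CA S C) {D D' : Finset C} (h : D ⊆ D') : I.O D ≤ I.O D' :=
  Finset.sum_le_sum_of_subset_of_nonneg h (fun c _ _ => (I.credits_pos c).le)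

lemma CA.O_pos (I : CA S C) {D : Finset C} (h : D.Nonempty) : 0 < I.O D := by
  obtain ⟨c, hc⟩ := h
  calc (0 : ℚ) < I.credits c := I.credits_pos c
    _ = I.O {c} := (I.O_singleton c).symm
    _ ≤ I.O D := I.O_mono (by simpa using hc)

lemma CA.O_nonneg (I : CA S C) (D : Finset C) : 0 ≤ I.O D :=
  (I.O_empty ▸ I.O_mono (Finset.empty_subset D) : _)

lemma subset_pair_cases {B : Finset C} {x y : C} (h : B ⊆ ({x, y} : Finset C)) :
    B = ∅ ∨ B = {x} ∨ B = {y} ∨ B = {x, y} := by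
  by_cases hx : x ∈ B <;> by_cases hy : y ∈ B
  · right; right; right
    refine subset_antisymm h ?_
    intro a ha
    simp only [Finset.mem_insert, Finset.mem_singleton] at ha
    rcases ha with rfl | rfl <;> assumption
  · right; left
    refine subset_antisymm ?_ (by simpa using hx)
    intro a ha
    have := h ha
    simp only [Finset.mem_insert, Finset.mem_singleton] at this ⊢
    rcases this with rfl | rfl
    · rfl
    · exact absurd ha hy
  · right; right; left
    refine subset_antisymm ?_ (by simpa using hy)
    intro a ha
    have := h ha
    simp only [Finset.mem_insert, Finset.mem_singleton] at this ⊢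
    rcases this with rfl | rfl
    · exact absurd ha hx
    · rfl
  · left
    refine Finset.eq_empty_of_forall_notMem ?_
    intro a ha
    have := h ha
    simp only [Finset.mem_insert, Finset.mem_singleton] at this
    rcases this with rfl | rfl
    · exact hx ha
    · exact hy ha

/-- First-coalition-stability is stronger than coalition-stability. -/
lemma CA.FirstCoalitionStable.coalitionStable {I : CA S C} {F : S → Set (Finset C)}
    {M : Finset (S × C)} (h : I.FirstCoalitionStable F M) : I.CoalitionStable F M := by
  intro s B hb
  obtain ⟨hne, h1, h2, D, hD, hpref, hOD, hlim, hF⟩ := hb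
  obtain ⟨b, hb⟩ := hne
  exact h s B ⟨⟨b, hb⟩, h1, h2, D, hD, ⟨b, hb, fun c' hc' => hpref b hb c' hc'⟩, hOD, hlim, hF⟩

end AuxGeneral


/-! ### Gadget API -/

section GadgetAPI
open Finset
variable {n1 n2 : ℕ}

/-- The student `s_i^1`. -/
abbrev stA (i : Fin n2) : S16 n1 n2 := Sum.inl (i, 0)
/-- The student `s_i^2`. -/
abbrev stB (i : Fin n2) : S16 n1 n2 := Sum.inl (i, 1)
/-- The student `s_i^3`. -/
abbrev stC (i : Fin n2) : S16 n1 n2 := Sum.inl (i, 2)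
/-- The student `s_i^4`. -/
abbrev stD (i : Fin n2) : S16 n1 n2 := Sum.inl (i, 3)
/-- The student `p_j`. -/
abbrev stP (j : Fin n1) : S16 n1 n2 := Sum.inr j
/-- The course `d_i^1`. -/
abbrev cd1 (i : Fin n2) : C16 n1 n2 := Sum.inl (i, 0)
/-- The course `d_i^2`. -/
abbrev cd2 (i : Fin n2) : C16 n1 n2 := Sum.inl (i, 1)
/-- The course `d_i^3`. -/
abbrev cd3 (i : Fin n2) : C16 n1 n2 := Sum.inl (i, 2)
/-- The course `c_j`. -/
abbrev cco (j : Fin n1) : C16 n1 n2 := Sum.inr (Sum.inl j)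
/-- The course `e`. -/
abbrev cee : C16 n1 n2 := Sum.inr (Sum.inr ())

variable (nb1 nb2 : Fin n2 → Fin n1) (K : ℕ)

lemma I16_acc : (I16 (n1 := n1) nb1 nb2 K).acc = acc16 nb1 nb2 := rfl
lemma I16_credits : (I16 (n1 := n1) nb1 nb2 K).credits = credits16 := rfl
lemma I16_quota : (I16 (n1 := n1) nb1 nb2 K).quota = quota16 K := rfl
lemma I16_limit : (I16 (n1 := n1) nb1 nb2 K).limit = limit16 := rfl

lemma I16_sPref_iff {s : S16 n1 n2} {c c' : C16 n1 n2} :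
    (I16 nb1 nb2 K).sPref s c c' ↔ acc16 nb1 nb2 s c ∧ acc16 nb1 nb2 s c' ∧
      (srank16 nb1 nb2 s c < srank16 nb1 nb2 s c' ∨
        (srank16 nb1 nb2 s c = srank16 nb1 nb2 s c' ∧
          Encodable.encode c < Encodable.encode c')) := Iff.rfl

lemma I16_cPref_iff {c : C16 n1 n2} {s s' : S16 n1 n2} :
    (I16 nb1 nb2 K).cPref c s s' ↔ acc16 nb1 nb2 s c ∧ acc16 nb1 nb2 s' c ∧
      (mrank16 s < mrank16 s' ∨
        (mrank16 s = mrank16 s' ∧ Encodable.encode s < Encodable.encode s')) := Iff.rfl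

lemma sPref16_of {s : S16 n1 n2} {c c' : C16 n1 n2} (h1 : acc16 nb1 nb2 s c)
    (h2 : acc16 nb1 nb2 s c') (h : srank16 nb1 nb2 s c < srank16 nb1 nb2 s c') :
    (I16 nb1 nb2 K).sPref s c c' := ⟨h1, h2, Or.inl h⟩

lemma not_sPref16 {s : S16 n1 n2} {c c' : C16 n1 n2}
    (h : srank16 nb1 nb2 s c' < srank16 nb1 nb2 s c) :
    ¬ (I16 nb1 nb2 K).sPref s c c' := by
  rintro ⟨-, -, h' | ⟨h', -⟩⟩ <;> omega

lemma cPref16_of {c : C16 n1 n2} {s s' : S16 n1 n2} (h1 : acc16 nb1 nb2 s c)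
    (h2 : acc16 nb1 nb2 s' c) (h : mrank16 s < mrank16 s') :
    (I16 nb1 nb2 K).cPref c s s' := ⟨h1, h2, Or.inl h⟩

lemma not_cPref16 {c : C16 n1 n2} {s s' : S16 n1 n2}
    (h : mrank16 s' < mrank16 s) : ¬ (I16 nb1 nb2 K).cPref c s s' := by
  intro hp
  rcases (I16_cPref_iff nb1 nb2 K).mp hp with ⟨-, -, h' | ⟨h', -⟩⟩ <;> omega

/-! acceptability inversion lemmas -/

lemma accA_inv {i : Fin n2} {c : C16 n1 n2} (h : acc16 nb1 nb2 (stA i) c) :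
    c = cco (nb1 i) ∨ c = cd1 i := by
  rcases c with ⟨i', r⟩ | j | u
  · obtain ⟨rfl, hr⟩ := h
    simp only [acc16] at hr
    simp at hr
    right; simp [cd1, hr]
  · simp only [acc16] at h
    simp at h
    left; simp [cco, h]
  · simp only [acc16] at h
    exact absurd h (by decide)

lemma accB_inv {i : Fin n2} {c : C16 n1 n2} (h : acc16 nb1 nb2 (stB i) c) :
    c = cco (nb2 i) ∨ c = cd1 i ∨ c = cd2 i := by
  rcases c with ⟨i', r⟩ | j | u
  · obtain ⟨rfl, hr⟩ := h
    simp at hr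
    rcases hr with rfl | rfl
    · right; left; rfl
    · right; right; rfl
  · simp only [acc16] at h
    simp at h
    left; simp [cco, h]
  · simp only [acc16] at h
    exact absurd h (by decide)

lemma accC_inv {i : Fin n2} {c : C16 n1 n2} (h : acc16 nb1 nb2 (stC i) c) :
    c = cd2 i ∨ c = cd3 i ∨ c = cco (nb1 i) ∨ c = cco (nb2 i) ∨ c = cee := by
  rcases c with ⟨i', r⟩ | j | u
  · obtain ⟨rfl, hr⟩ := h
    simp at hr
    rcases hr with rfl | rfl
    · left; rfl
    · right; left; rfl
  · simp only [acc16] at h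
    simp at h
    rcases h with rfl | rfl
    · right; right; left; rfl
    · right; right; right; left; rfl
  · right; right; right; right; rfl

lemma accD_inv {i : Fin n2} {c : C16 n1 n2} (h : acc16 nb1 nb2 (stD i) c) :
    c = cd3 i := by
  rcases c with ⟨i', r⟩ | j | u
  · obtain ⟨rfl, hr⟩ := h
    simp at hr
    simp [cd3, hr]
  · simp only [acc16] at h
    simp at h
  · simp only [acc16] at h
    exact absurd h (by decide)

lemma accP_inv {j : Fin n1} {c : C16 n1 n2} (h : acc16 nb1 nb2 (stP j) c) :
    c = cco j := by
  rcases c with ⟨i', r⟩ | j' | u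
  · exact absurd h id
  · simp only [acc16] at h
    simp [cco, h]
  · exact absurd h id

/-- course-side inversion for `d_i^r`. -/
lemma acc_d_inv {x : S16 n1 n2} {i : Fin n2} {r : Fin 3} (h : acc16 nb1 nb2 x (Sum.inl (i, r))) :
    (r = 0 ∧ (x = stA i ∨ x = stB i)) ∨ (r = 1 ∧ (x = stB i ∨ x = stC i)) ∨
      (r = 2 ∧ (x = stC i ∨ x = stD i)) := by
  rcases x with ⟨i', t⟩ | j
  · obtain ⟨rfl, hr⟩ := h
    fin_cases t <;> simp_all <;> omega
  · exact absurd h id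

lemma acc_co_inv {x : S16 n1 n2} {j : Fin n1} (h : acc16 nb1 nb2 x (cco j)) :
    (∃ i, x = stA i ∧ j = nb1 i) ∨ (∃ i, x = stB i ∧ j = nb2 i) ∨
      (∃ i, x = stC i ∧ (j = nb1 i ∨ j = nb2 i)) ∨ x = stP j := by
  rcases x with ⟨i', t⟩ | j'
  · simp only [acc16] at h
    fin_cases t <;> simp_all
  · simp only [acc16] at h
    subst h
    right; right; right; rfl

lemma acc_e_inv {x : S16 n1 n2} (h : acc16 nb1 nb2 x (cee)) : ∃ i, x = stC i := by
  rcases x with ⟨i', t⟩ | j'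
  · simp only [acc16] at h
    exact ⟨i', by simp [h]⟩
  · exact absurd h id

/-! numeric simp lemmas -/

@[simp] lemma credits_d1 (i : Fin n2) : credits16 (cd1 (n1 := n1) i) = 2 := by simp [credits16]
@[simp] lemma credits_d2 (i : Fin n2) : credits16 (cd2 (n1 := n1) i) = 2 := by simp [credits16]
@[simp] lemma credits_d3 (i : Fin n2) : credits16 (cd3 (n1 := n1) i) = 1 := by simp [credits16]
@[simp] lemma credits_co (j : Fin n1) : credits16 (cco (n2 := n2) j) = 1 := by simp [credits16]
@[simp] lemma credits_e : credits16 (cee (n1 := n1) (n2 := n2)) = 2 := by simp [credits16]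

@[simp] lemma limit_stA (i : Fin n2) : limit16 (stA (n1 := n1) i) = 2 := by simp [limit16]
@[simp] lemma limit_stB (i : Fin n2) : limit16 (stB (n1 := n1) i) = 2 := by simp [limit16]
@[simp] lemma limit_stC (i : Fin n2) : limit16 (stC (n1 := n1) i) = 2 := by simp [limit16]
@[simp] lemma limit_stD (i : Fin n2) : limit16 (stD (n1 := n1) i) = 1 := by simp [limit16]
@[simp] lemma limit_stP (j : Fin n1) : limit16 (stP (n2 := n2) j) = 1 := by simp [limit16]

@[simp] lemma quota_d (i : Fin n2) (r : Fin 3) :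
    quota16 (n1 := n1) K (Sum.inl (i, r)) = 1 := rfl
@[simp] lemma quota_co (j : Fin n1) : quota16 (n2 := n2) K (cco j) = 1 := rfl
@[simp] lemma quota_e : quota16 (n1 := n1) (n2 := n2) K cee = n2 - K := rfl

@[simp] lemma srank_A_d (i i' : Fin n2) (r : Fin 3) :
    srank16 nb1 nb2 (stA (n1 := n1) i) (Sum.inl (i', r)) = 1 := by simp [srank16]
@[simp] lemma srank_A_co (i : Fin n2) (j : Fin n1) :
    srank16 nb1 nb2 (stA (n1 := n1) i) (cco j) = 0 := by simp [srank16]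
@[simp] lemma srank_B_d1 (i i' : Fin n2) :
    srank16 nb1 nb2 (stB (n1 := n1) i) (cd1 i') = 1 := by simp [srank16]
@[simp] lemma srank_B_d2 (i i' : Fin n2) :
    srank16 nb1 nb2 (stB (n1 := n1) i) (cd2 i') = 2 := by simp [srank16]
@[simp] lemma srank_B_co (i : Fin n2) (j : Fin n1) :
    srank16 nb1 nb2 (stB (n1 := n1) i) (cco j) = 0 := by simp [srank16]
@[simp] lemma srank_C_d2 (i i' : Fin n2) :
    srank16 nb1 nb2 (stC (n1 := n1) i) (cd2 i') = 0 := by simp [srank16]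
@[simp] lemma srank_C_d3 (i i' : Fin n2) :
    srank16 nb1 nb2 (stC (n1 := n1) i) (cd3 i') = 1 := by simp [srank16]
@[simp] lemma srank_C_d1 (i i' : Fin n2) :
    srank16 nb1 nb2 (stC (n1 := n1) i) (cd1 i') = 1 := by simp [srank16]
lemma srank_C_co1 (i : Fin n2) : srank16 nb1 nb2 (stC (n1 := n1) i) (cco (nb1 i)) = 2 := by
  simp [srank16]
lemma srank_C_co2 (i : Fin n2) (hne : nb1 i ≠ nb2 i) :
    srank16 nb1 nb2 (stC (n1 := n1) i) (cco (nb2 i)) = 3 := by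
  simp [srank16, hne.symm]
lemma srank_C_co_ge (i : Fin n2) (j : Fin n1) :
    2 ≤ srank16 nb1 nb2 (stC (n1 := n1) i) (cco j) := by
  have h : srank16 nb1 nb2 (stC (n1 := n1) i) (cco j) = if j = nb1 i then 2 else 3 := by
    simp [srank16]
  rw [h]
  split <;> omega
@[simp] lemma srank_C_e (i : Fin n2) :
    srank16 nb1 nb2 (stC (n1 := n1) i) cee = 4 := by simp [srank16]

@[simp] lemma mrank_A (i : Fin n2) : mrank16 (stA (n1 := n1) i) = 2 * i.val := by simp [mrank16]
@[simp] lemma mrank_B (i : Fin n2) : mrank16 (stB (n1 := n1) i) = 2 * i.val + 1 := by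
  simp [mrank16]
@[simp] lemma mrank_C (i : Fin n2) : mrank16 (stC (n1 := n1) i) = 2 * n2 + i.val := by
  simp [mrank16]
@[simp] lemma mrank_D (i : Fin n2) : mrank16 (stD (n1 := n1) i) = 3 * n2 + n1 + i.val := by
  simp [mrank16]
@[simp] lemma mrank_P (j : Fin n1) : mrank16 (stP (n2 := n2) j) = 3 * n2 + j.val := by
  simp [mrank16]

lemma not_wants16 {M : Finset (S16 n1 n2 × C16 n1 n2)} {c : C16 n1 n2} {s x : S16 n1 n2}
    (hSM : SM M c = {x}) (hq : quota16 (n1 := n1) (n2 := n2) K c = 1)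
    (hnp : ¬ (I16 nb1 nb2 K).cPref c s x) : ¬ (I16 nb1 nb2 K).Wants M s c := by
  rintro (hlt | ⟨s', hs', hp⟩)
  · rw [hSM, Finset.card_singleton] at hlt
    have : (I16 (n1 := n1) nb1 nb2 K).quota c = quota16 K c := rfl
    omega
  · rw [hSM, Finset.mem_singleton] at hs'
    subst hs'
    exact hnp hp

end GadgetAPI

/-! ### The forward direction: from a small maximal matching to a stable matching -/

section Forward
open Finset
variable {n1 n2 : ℕ} (nb1 nb2 : Fin n2 → Fin n1) (K : ℕ)

/-- The matching of `I16(G,K)` built from a graph matching `f` and a set `E` of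
`f`-unmatched `W`-vertices whose `s_i^3` is sent to the course `e`. -/
def fwdPred (f : Fin n2 → Option (Fin n1)) (E : Finset (Fin n2)) :
    S16 n1 n2 × C16 n1 n2 → Prop
  | (.inl (i, t), .inl (i', r)) => i = i' ∧
      (if t = 0 then r = 0 ∧ f i ≠ some (nb1 i)
      else if t = 1 then (r = 0 ∧ f i = some (nb1 i)) ∨ (r = 1 ∧ f i = none)
      else if t = 2 then (r = 1 ∧ f i ≠ none) ∨ (r = 2 ∧ f i = none ∧ i ∉ E)
      else r = 2 ∧ (f i ≠ none ∨ i ∈ E))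
  | (.inl (i, t), .inr (.inl j)) =>
      if t = 0 then f i = some j ∧ j = nb1 i
      else if t = 1 then f i = some j ∧ j = nb2 i
      else False
  | (.inl (i, t), .inr (.inr _)) => t = 2 ∧ f i = none ∧ i ∈ E
  | (.inr j, .inr (.inl j')) => j = j' ∧ ∀ i, f i ≠ some j'
  | (.inr _, _) => False

noncomputable def fwdM (f : Fin n2 → Option (Fin n1)) (E : Finset (Fin n2)) :
    Finset (S16 n1 n2 × C16 n1 n2) :=
  @Finset.filter _ (fwdPred nb1 nb2 f E) (Classical.decPred _) Finset.univ

lemma mem_fwdM {f : Fin n2 → Option (Fin n1)} {E : Finset (Fin n2)}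
    {p : S16 n1 n2 × C16 n1 n2} : p ∈ fwdM nb1 nb2 f E ↔ fwdPred nb1 nb2 f E p := by
  classical
  simp [fwdM]

variable {f : Fin n2 → Option (Fin n1)} {E : Finset (Fin n2)}
  (hnb : ∀ i, nb1 i < nb2 i) (hmat : GMatching nb1 nb2 f)
  (hEnone : ∀ i ∈ E, f i = none)

lemma S16_cases (x : S16 n1 n2) :
    (∃ i, x = stA i) ∨ (∃ i, x = stB i) ∨ (∃ i, x = stC i) ∨ (∃ i, x = stD i) ∨
      ∃ j, x = stP j := by
  rcases x with ⟨i, t⟩ | j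
  · fin_cases t
    · exact Or.inl ⟨i, rfl⟩
    · exact Or.inr (Or.inl ⟨i, rfl⟩)
    · exact Or.inr (Or.inr (Or.inl ⟨i, rfl⟩))
    · exact Or.inr (Or.inr (Or.inr (Or.inl ⟨i, rfl⟩)))
  · exact Or.inr (Or.inr (Or.inr (Or.inr ⟨j, rfl⟩)))

lemma C16_cases (c : C16 n1 n2) :
    (∃ i, c = cd1 i) ∨ (∃ i, c = cd2 i) ∨ (∃ i, c = cd3 i) ∨ (∃ j, c = cco j) ∨ c = cee := by
  rcases c with ⟨i, r⟩ | j | u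
  · fin_cases r
    · exact Or.inl ⟨i, rfl⟩
    · exact Or.inr (Or.inl ⟨i, rfl⟩)
    · exact Or.inr (Or.inr (Or.inl ⟨i, rfl⟩))
  · exact Or.inr (Or.inr (Or.inr (Or.inl ⟨j, rfl⟩)))
  · exact Or.inr (Or.inr (Or.inr (Or.inr rfl)))

section SMCM

lemma stl_eq_iff {i i' : Fin n2} {t : Fin 4} :
    (Sum.inl (i, t) : S16 n1 n2) = Sum.inl (i', t) ↔ i = i' := by simp

lemma stl_ne {i i' : Fin n2} {t t' : Fin 4} (h : t ≠ t') :
    (Sum.inl (i, t) : S16 n1 n2) ≠ Sum.inl (i', t') := by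
  intro hh
  injection hh with h1
  injection h1 with h2 h3
  exact h h3

lemma crl_eq_iff {i i' : Fin n2} {r : Fin 3} :
    (Sum.inl (i, r) : C16 n1 n2) = Sum.inl (i', r) ↔ i = i' := by simp

lemma crl_ne {i i' : Fin n2} {r r' : Fin 3} (h : r ≠ r') :
    (Sum.inl (i, r) : C16 n1 n2) ≠ Sum.inl (i', r') := by
  intro hh
  injection hh with h1
  injection h1 with h2 h3
  exact h h3

/-! membership unfolding lemmas for `fwdM` -/

lemma mem_fwd_A_d {i i' : Fin n2} {r : Fin 3} :
    (stA i, (Sum.inl (i', r) : C16 n1 n2)) ∈ fwdM nb1 nb2 f E ↔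
      i = i' ∧ (r = 0 ∧ f i ≠ some (nb1 i)) := by
  rw [mem_fwdM]; exact Iff.rfl

lemma mem_fwd_A_co {i : Fin n2} {j : Fin n1} :
    (stA i, cco j) ∈ fwdM nb1 nb2 f E ↔ f i = some j ∧ j = nb1 i := by
  rw [mem_fwdM]; exact Iff.rfl

lemma mem_fwd_A_e {i : Fin n2} :
    (stA i, cee) ∈ fwdM nb1 nb2 f E ↔ False := by
  rw [mem_fwdM]; simp [fwdPred]

lemma mem_fwd_B_d {i i' : Fin n2} {r : Fin 3} :
    (stB i, (Sum.inl (i', r) : C16 n1 n2)) ∈ fwdM nb1 nb2 f E ↔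
      i = i' ∧ ((r = 0 ∧ f i = some (nb1 i)) ∨ (r = 1 ∧ f i = none)) := by
  rw [mem_fwdM]; exact Iff.rfl

lemma mem_fwd_B_co {i : Fin n2} {j : Fin n1} :
    (stB i, cco j) ∈ fwdM nb1 nb2 f E ↔ f i = some j ∧ j = nb2 i := by
  rw [mem_fwdM]; exact Iff.rfl

lemma mem_fwd_B_e {i : Fin n2} :
    (stB i, cee) ∈ fwdM nb1 nb2 f E ↔ False := by
  rw [mem_fwdM]; simp [fwdPred]

lemma mem_fwd_C_d {i i' : Fin n2} {r : Fin 3} :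
    (stC i, (Sum.inl (i', r) : C16 n1 n2)) ∈ fwdM nb1 nb2 f E ↔
      i = i' ∧ ((r = 1 ∧ f i ≠ none) ∨ (r = 2 ∧ f i = none ∧ i ∉ E)) := by
  rw [mem_fwdM]; exact Iff.rfl

lemma mem_fwd_C_co {i : Fin n2} {j : Fin n1} :
    (stC i, cco j) ∈ fwdM nb1 nb2 f E ↔ False := by
  rw [mem_fwdM]; exact Iff.rfl

lemma mem_fwd_C_e {i : Fin n2} :
    (stC i, cee) ∈ fwdM nb1 nb2 f E ↔ f i = none ∧ i ∈ E := by
  rw [mem_fwdM]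
  constructor
  · rintro ⟨-, h⟩; exact h
  · intro h; exact ⟨rfl, h⟩

lemma mem_fwd_D_d {i i' : Fin n2} {r : Fin 3} :
    (stD i, (Sum.inl (i', r) : C16 n1 n2)) ∈ fwdM nb1 nb2 f E ↔
      i = i' ∧ (r = 2 ∧ (f i ≠ none ∨ i ∈ E)) := by
  rw [mem_fwdM]; exact Iff.rfl

lemma mem_fwd_D_co {i : Fin n2} {j : Fin n1} :
    (stD i, cco j) ∈ fwdM nb1 nb2 f E ↔ False := by
  rw [mem_fwdM]; exact Iff.rfl

lemma mem_fwd_D_e {i : Fin n2} :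
    (stD i, cee) ∈ fwdM nb1 nb2 f E ↔ False := by
  rw [mem_fwdM]; simp [fwdPred]

lemma mem_fwd_P_d {j : Fin n1} {i' : Fin n2} {r : Fin 3} :
    (stP j, (Sum.inl (i', r) : C16 n1 n2)) ∈ fwdM nb1 nb2 f E ↔ False := by
  rw [mem_fwdM]; exact Iff.rfl

lemma mem_fwd_P_co {j j' : Fin n1} :
    (stP j', cco j) ∈ fwdM nb1 nb2 f E ↔ j' = j ∧ ∀ i, f i ≠ some j := by
  rw [mem_fwdM]; exact Iff.rfl

lemma mem_fwd_P_e {j : Fin n1} :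
    (stP j, cee) ∈ fwdM nb1 nb2 f E ↔ False := by
  rw [mem_fwdM]; exact Iff.rfl

variable (i : Fin n2) (j : Fin n1)

lemma fwd_SM_d1 (i : Fin n2) :
    SM (fwdM nb1 nb2 f E) (cd1 i) = if f i = some (nb1 i) then {stB i} else {stA i} := by
  by_cases hf : f i = some (nb1 i)
  · rw [if_pos hf]
    ext x
    rw [mem_SM, Finset.mem_singleton]
    rcases S16_cases x with ⟨i2, rfl⟩ | ⟨i2, rfl⟩ | ⟨i2, rfl⟩ | ⟨i2, rfl⟩ | ⟨j2, rfl⟩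
    · rw [mem_fwd_A_d]
      constructor
      · rintro ⟨rfl, -, hne⟩
        exact absurd hf hne
      · intro hx
        exact absurd hx (stl_ne (by decide))
    · rw [mem_fwd_B_d]
      constructor
      · rintro ⟨rfl, ⟨-, -⟩ | ⟨hr, -⟩⟩
        · rfl
        · exact absurd hr (by decide)
      · intro hx
        rw [stl_eq_iff] at hx
        subst hx
        exact ⟨rfl, Or.inl ⟨rfl, hf⟩⟩
    · rw [mem_fwd_C_d]
      constructor
      · rintro ⟨rfl, ⟨hr, -⟩ | ⟨hr, -⟩⟩ <;> exact absurd hr (by decide)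
      · intro hx
        exact absurd hx (stl_ne (by decide))
    · rw [mem_fwd_D_d]
      constructor
      · rintro ⟨rfl, hr, -⟩
        exact absurd hr (by decide)
      · intro hx
        exact absurd hx (stl_ne (by decide))
    · rw [mem_fwd_P_d]
      exact ⟨False.elim, fun hx => absurd hx (by simp)⟩
  · rw [if_neg hf]
    ext x
    rw [mem_SM, Finset.mem_singleton]
    rcases S16_cases x with ⟨i2, rfl⟩ | ⟨i2, rfl⟩ | ⟨i2, rfl⟩ | ⟨i2, rfl⟩ | ⟨j2, rfl⟩
    · rw [mem_fwd_A_d]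
      constructor
      · rintro ⟨rfl, -, -⟩
        rfl
      · intro hx
        rw [stl_eq_iff] at hx
        subst hx
        exact ⟨rfl, rfl, hf⟩
    · rw [mem_fwd_B_d]
      constructor
      · rintro ⟨rfl, ⟨-, hsome⟩ | ⟨hr, -⟩⟩
        · exact absurd hsome hf
        · exact absurd hr (by decide)
      · intro hx
        exact absurd hx (stl_ne (by decide))
    · rw [mem_fwd_C_d]
      constructor
      · rintro ⟨rfl, ⟨hr, -⟩ | ⟨hr, -⟩⟩ <;> exact absurd hr (by decide)
      · intro hx
        exact absurd hx (stl_ne (by decide))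
    · rw [mem_fwd_D_d]
      constructor
      · rintro ⟨rfl, hr, -⟩
        exact absurd hr (by decide)
      · intro hx
        exact absurd hx (stl_ne (by decide))
    · rw [mem_fwd_P_d]
      exact ⟨False.elim, fun hx => absurd hx (by simp)⟩

lemma fwd_SM_d2 (i : Fin n2) :
    SM (fwdM nb1 nb2 f E) (cd2 i) = if f i = none then {stB i} else {stC i} := by
  by_cases hf : f i = none
  · rw [if_pos hf]
    ext x
    rw [mem_SM, Finset.mem_singleton]
    rcases S16_cases x with ⟨i2, rfl⟩ | ⟨i2, rfl⟩ | ⟨i2, rfl⟩ | ⟨i2, rfl⟩ | ⟨j2, rfl⟩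
    · rw [mem_fwd_A_d]
      constructor
      · rintro ⟨rfl, hr, -⟩
        exact absurd hr (by decide)
      · intro hx
        exact absurd hx (stl_ne (by decide))
    · rw [mem_fwd_B_d]
      constructor
      · rintro ⟨rfl, ⟨hr, -⟩ | ⟨-, -⟩⟩
        · exact absurd hr (by decide)
        · rfl
      · intro hx
        rw [stl_eq_iff] at hx
        subst hx
        exact ⟨rfl, Or.inr ⟨rfl, hf⟩⟩
    · rw [mem_fwd_C_d]
      constructor
      · rintro ⟨rfl, ⟨-, hne⟩ | ⟨hr, -⟩⟩
        · exact absurd hf hne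
        · exact absurd hr (by decide)
      · intro hx
        exact absurd hx (stl_ne (by decide))
    · rw [mem_fwd_D_d]
      constructor
      · rintro ⟨rfl, hr, -⟩
        exact absurd hr (by decide)
      · intro hx
        exact absurd hx (stl_ne (by decide))
    · rw [mem_fwd_P_d]
      exact ⟨False.elim, fun hx => absurd hx (by simp)⟩
  · rw [if_neg hf]
    ext x
    rw [mem_SM, Finset.mem_singleton]
    rcases S16_cases x with ⟨i2, rfl⟩ | ⟨i2, rfl⟩ | ⟨i2, rfl⟩ | ⟨i2, rfl⟩ | ⟨j2, rfl⟩
    · rw [mem_fwd_A_d]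
      constructor
      · rintro ⟨rfl, hr, -⟩
        exact absurd hr (by decide)
      · intro hx
        exact absurd hx (stl_ne (by decide))
    · rw [mem_fwd_B_d]
      constructor
      · rintro ⟨rfl, ⟨hr, -⟩ | ⟨-, hnone⟩⟩
        · exact absurd hr (by decide)
        · exact absurd hnone hf
      · intro hx
        exact absurd hx (stl_ne (by decide))
    · rw [mem_fwd_C_d]
      constructor
      · rintro ⟨rfl, ⟨-, -⟩ | ⟨hr, -⟩⟩
        · rfl
        · exact absurd hr (by decide)
      · intro hx
        rw [stl_eq_iff] at hx
        subst hx
        exact ⟨rfl, Or.inl ⟨rfl, hf⟩⟩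
    · rw [mem_fwd_D_d]
      constructor
      · rintro ⟨rfl, hr, -⟩
        exact absurd hr (by decide)
      · intro hx
        exact absurd hx (stl_ne (by decide))
    · rw [mem_fwd_P_d]
      exact ⟨False.elim, fun hx => absurd hx (by simp)⟩

lemma fwd_SM_d3 (i : Fin n2) :
    SM (fwdM nb1 nb2 f E) (cd3 i) =
      if f i = none ∧ i ∉ E then {stC i} else {stD i} := by
  classical
  by_cases hf : f i = none ∧ i ∉ E
  · rw [if_pos hf]
    ext x
    rw [mem_SM, Finset.mem_singleton]
    rcases S16_cases x with ⟨i2, rfl⟩ | ⟨i2, rfl⟩ | ⟨i2, rfl⟩ | ⟨i2, rfl⟩ | ⟨j2, rfl⟩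
    · rw [mem_fwd_A_d]
      constructor
      · rintro ⟨rfl, hr, -⟩
        exact absurd hr (by decide)
      · intro hx
        exact absurd hx (stl_ne (by decide))
    · rw [mem_fwd_B_d]
      constructor
      · rintro ⟨rfl, ⟨hr, -⟩ | ⟨hr, -⟩⟩ <;> exact absurd hr (by decide)
      · intro hx
        exact absurd hx (stl_ne (by decide))
    · rw [mem_fwd_C_d]
      constructor
      · rintro ⟨rfl, ⟨hr, -⟩ | ⟨-, -, -⟩⟩
        · exact absurd hr (by decide)
        · rfl
      · intro hx
        rw [stl_eq_iff] at hx
        subst hx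
        exact ⟨rfl, Or.inr ⟨rfl, hf.1, hf.2⟩⟩
    · rw [mem_fwd_D_d]
      constructor
      · rintro ⟨rfl, -, hor⟩
        rcases hor with hne | hE
        · exact absurd hf.1 hne
        · exact absurd hE hf.2
      · intro hx
        exact absurd hx (stl_ne (by decide))
    · rw [mem_fwd_P_d]
      exact ⟨False.elim, fun hx => absurd hx (by simp)⟩
  · rw [if_neg hf]
    ext x
    rw [mem_SM, Finset.mem_singleton]
    rcases S16_cases x with ⟨i2, rfl⟩ | ⟨i2, rfl⟩ | ⟨i2, rfl⟩ | ⟨i2, rfl⟩ | ⟨j2, rfl⟩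
    · rw [mem_fwd_A_d]
      constructor
      · rintro ⟨rfl, hr, -⟩
        exact absurd hr (by decide)
      · intro hx
        exact absurd hx (stl_ne (by decide))
    · rw [mem_fwd_B_d]
      constructor
      · rintro ⟨rfl, ⟨hr, -⟩ | ⟨hr, -⟩⟩ <;> exact absurd hr (by decide)
      · intro hx
        exact absurd hx (stl_ne (by decide))
    · rw [mem_fwd_C_d]
      constructor
      · rintro ⟨rfl, ⟨hr, -⟩ | ⟨-, hnone, hE⟩⟩
        · exact absurd hr (by decide)
        · exact absurd ⟨hnone, hE⟩ hf
      · intro hx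
        exact absurd hx (stl_ne (by decide))
    · rw [mem_fwd_D_d]
      constructor
      · rintro ⟨rfl, -, -⟩
        rfl
      · intro hx
        rw [stl_eq_iff] at hx
        subst hx
        refine ⟨rfl, rfl, ?_⟩
        by_cases h1 : f i2 = none
        · by_cases h2 : i2 ∈ E
          · exact Or.inr h2
          · exact absurd ⟨h1, h2⟩ hf
        · exact Or.inl h1
    · rw [mem_fwd_P_d]
      exact ⟨False.elim, fun hx => absurd hx (by simp)⟩

lemma fwd_SM_co1 (hnb : ∀ i, nb1 i < nb2 i) (hmat : GMatching nb1 nb2 f)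
    {i : Fin n2} {j : Fin n1} (h : f i = some j) (h1 : j = nb1 i) :
    SM (fwdM nb1 nb2 f E) (cco j) = {stA i} := by
  ext x
  rw [mem_SM, Finset.mem_singleton]
  rcases S16_cases x with ⟨i2, rfl⟩ | ⟨i2, rfl⟩ | ⟨i2, rfl⟩ | ⟨i2, rfl⟩ | ⟨j2, rfl⟩
  · rw [mem_fwd_A_co]
    constructor
    · rintro ⟨h', -⟩
      rw [stl_eq_iff, hmat.2 _ _ _ h' h]
    · intro hx
      rw [stl_eq_iff] at hx
      subst hx
      exact ⟨h, h1⟩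
  · rw [mem_fwd_B_co]
    constructor
    · rintro ⟨h', h2⟩
      obtain rfl := hmat.2 _ _ _ h' h
      exact absurd (h1.symm.trans h2) (hnb i2).ne
    · intro hx
      exact absurd hx (stl_ne (by decide))
  · rw [mem_fwd_C_co]
    exact ⟨False.elim, fun hx => absurd hx (stl_ne (by decide))⟩
  · rw [mem_fwd_D_co]
    exact ⟨False.elim, fun hx => absurd hx (stl_ne (by decide))⟩
  · rw [mem_fwd_P_co]
    constructor
    · rintro ⟨-, h'⟩
      exact absurd h (h' i)
    · intro hx
      exact absurd hx (by simp)

lemma fwd_SM_co2 (hnb : ∀ i, nb1 i < nb2 i) (hmat : GMatching nb1 nb2 f)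
    {i : Fin n2} {j : Fin n1} (h : f i = some j) (h2 : j = nb2 i) :
    SM (fwdM nb1 nb2 f E) (cco j) = {stB i} := by
  ext x
  rw [mem_SM, Finset.mem_singleton]
  rcases S16_cases x with ⟨i2, rfl⟩ | ⟨i2, rfl⟩ | ⟨i2, rfl⟩ | ⟨i2, rfl⟩ | ⟨j2, rfl⟩
  · rw [mem_fwd_A_co]
    constructor
    · rintro ⟨h', h1⟩
      obtain rfl := hmat.2 _ _ _ h' h
      exact absurd (h1.symm.trans h2) (hnb i2).ne
    · intro hx
      exact absurd hx (stl_ne (by decide))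
  · rw [mem_fwd_B_co]
    constructor
    · rintro ⟨h', -⟩
      rw [stl_eq_iff, hmat.2 _ _ _ h' h]
    · intro hx
      rw [stl_eq_iff] at hx
      subst hx
      exact ⟨h, h2⟩
  · rw [mem_fwd_C_co]
    exact ⟨False.elim, fun hx => absurd hx (stl_ne (by decide))⟩
  · rw [mem_fwd_D_co]
    exact ⟨False.elim, fun hx => absurd hx (stl_ne (by decide))⟩
  · rw [mem_fwd_P_co]
    constructor
    · rintro ⟨-, h'⟩
      exact absurd h (h' i)
    · intro hx
      exact absurd hx (by simp)

lemma fwd_SM_co_none {j : Fin n1} (h : ∀ i, f i ≠ some j) :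
    SM (fwdM nb1 nb2 f E) (cco j) = {stP j} := by
  ext x
  rw [mem_SM, Finset.mem_singleton]
  rcases S16_cases x with ⟨i2, rfl⟩ | ⟨i2, rfl⟩ | ⟨i2, rfl⟩ | ⟨i2, rfl⟩ | ⟨j2, rfl⟩
  · rw [mem_fwd_A_co]
    exact ⟨fun hx => absurd hx.1 (h i2), fun hx => absurd hx (by simp)⟩
  · rw [mem_fwd_B_co]
    exact ⟨fun hx => absurd hx.1 (h i2), fun hx => absurd hx (by simp)⟩
  · rw [mem_fwd_C_co]
    exact ⟨False.elim, fun hx => absurd hx (by simp)⟩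
  · rw [mem_fwd_D_co]
    exact ⟨False.elim, fun hx => absurd hx (by simp)⟩
  · rw [mem_fwd_P_co]
    constructor
    · rintro ⟨rfl, -⟩
      rfl
    · intro hx
      injection hx with hx'
      exact ⟨hx', h⟩

lemma fwd_SM_e (hEnone : ∀ i ∈ E, f i = none) :
    SM (fwdM nb1 nb2 f E) (cee) = E.image (stC (n1 := n1)) := by
  ext x
  rw [mem_SM]
  rcases S16_cases x with ⟨i2, rfl⟩ | ⟨i2, rfl⟩ | ⟨i2, rfl⟩ | ⟨i2, rfl⟩ | ⟨j2, rfl⟩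
  · rw [mem_fwd_A_e]
    constructor
    · exact False.elim
    · intro hx
      obtain ⟨a, -, ha⟩ := Finset.mem_image.mp hx
      exact absurd ha (stl_ne (by decide))
  · rw [mem_fwd_B_e]
    constructor
    · exact False.elim
    · intro hx
      obtain ⟨a, -, ha⟩ := Finset.mem_image.mp hx
      exact absurd ha (stl_ne (by decide))
  · rw [mem_fwd_C_e]
    constructor
    · rintro ⟨-, hE⟩
      exact Finset.mem_image.mpr ⟨i2, hE, rfl⟩
    · intro hx
      obtain ⟨a, ha, haeq⟩ := Finset.mem_image.mp hx
      rw [stl_eq_iff] at haeq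
      subst haeq
      exact ⟨hEnone _ ha, ha⟩
  · rw [mem_fwd_D_e]
    constructor
    · exact False.elim
    · intro hx
      obtain ⟨a, -, ha⟩ := Finset.mem_image.mp hx
      exact absurd ha (stl_ne (by decide))
  · rw [mem_fwd_P_e]
    constructor
    · exact False.elim
    · intro hx
      obtain ⟨a, -, ha⟩ := Finset.mem_image.mp hx
      exact absurd ha (by simp)

/-! `CM` computations for `fwdM` -/

lemma fwd_CM_A1 {i : Fin n2} (h : f i = some (nb1 i)) :
    CM (fwdM nb1 nb2 f E) (stA i) = {cco (nb1 i)} := by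
  ext c
  rw [mem_CM, Finset.mem_singleton]
  rcases c with ⟨i2, r⟩ | j2 | u
  · rw [mem_fwd_A_d]
    constructor
    · rintro ⟨-, -, hf⟩
      exact absurd h hf
    · intro hx
      exact absurd hx (by simp)
  · rw [mem_fwd_A_co]
    constructor
    · rintro ⟨h', rfl⟩
      rfl
    · intro hx
      injection hx with hx'
      injection hx' with hx''
      exact ⟨hx'' ▸ h, hx''⟩
  · rw [mem_fwd_A_e]
    exact ⟨False.elim, fun hx => absurd hx (by simp [cee])⟩

lemma fwd_CM_A2 {i : Fin n2} (h : f i ≠ some (nb1 i)) :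
    CM (fwdM nb1 nb2 f E) (stA i) = {cd1 i} := by
  ext c
  rw [mem_CM, Finset.mem_singleton]
  rcases c with ⟨i2, r⟩ | j2 | u
  · rw [mem_fwd_A_d]
    constructor
    · rintro ⟨rfl, rfl, -⟩
      rfl
    · intro hx
      injection hx with hx'
      injection hx' with h1 h2
      exact ⟨h1.symm, h2, h⟩
  · rw [mem_fwd_A_co]
    constructor
    · rintro ⟨h', rfl⟩
      exact absurd h' h
    · intro hx
      exact absurd hx (by simp)
  · rw [mem_fwd_A_e]
    exact ⟨False.elim, fun hx => absurd hx (by simp [cee])⟩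

lemma fwd_CM_B1 (hnb : ∀ i, nb1 i < nb2 i) {i : Fin n2} (h : f i = some (nb1 i)) :
    CM (fwdM nb1 nb2 f E) (stB i) = {cd1 i} := by
  ext c
  rw [mem_CM, Finset.mem_singleton]
  rcases c with ⟨i2, r⟩ | j2 | u
  · rw [mem_fwd_B_d]
    constructor
    · rintro ⟨rfl, ⟨rfl, -⟩ | ⟨-, hf⟩⟩
      · rfl
      · rw [h] at hf
        exact absurd hf (by simp)
    · intro hx
      injection hx with hx'
      injection hx' with h1 h2
      exact ⟨h1.symm, Or.inl ⟨h2, h⟩⟩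
  · rw [mem_fwd_B_co]
    constructor
    · rintro ⟨h', rfl⟩
      rw [h] at h'
      injection h' with h''
      exact absurd h'' (hnb i).ne
    · intro hx
      exact absurd hx (by simp)
  · rw [mem_fwd_B_e]
    exact ⟨False.elim, fun hx => absurd hx (by simp [cee])⟩

lemma fwd_CM_B2 (hnb : ∀ i, nb1 i < nb2 i) {i : Fin n2} (h : f i = some (nb2 i)) :
    CM (fwdM nb1 nb2 f E) (stB i) = {cco (nb2 i)} := by
  ext c
  rw [mem_CM, Finset.mem_singleton]
  rcases c with ⟨i2, r⟩ | j2 | u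
  · rw [mem_fwd_B_d]
    constructor
    · rintro ⟨rfl, ⟨-, hf⟩ | ⟨-, hf⟩⟩ <;> rw [h] at hf
      · injection hf with h''
        exact absurd h''.symm (hnb i).ne
      · exact absurd hf (by simp)
    · intro hx
      exact absurd hx (by simp)
  · rw [mem_fwd_B_co]
    constructor
    · rintro ⟨h', rfl⟩
      rfl
    · intro hx
      injection hx with hx'
      injection hx' with hx''
      exact ⟨hx'' ▸ h, hx''⟩
  · rw [mem_fwd_B_e]
    exact ⟨False.elim, fun hx => absurd hx (by simp [cee])⟩

lemma fwd_CM_B3 {i : Fin n2} (h : f i = none) :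
    CM (fwdM nb1 nb2 f E) (stB i) = {cd2 i} := by
  ext c
  rw [mem_CM, Finset.mem_singleton]
  rcases c with ⟨i2, r⟩ | j2 | u
  · rw [mem_fwd_B_d]
    constructor
    · rintro ⟨rfl, ⟨-, hf⟩ | ⟨rfl, -⟩⟩
      · rw [h] at hf
        exact absurd hf (by simp)
      · rfl
    · intro hx
      injection hx with hx'
      injection hx' with h1 h2
      exact ⟨h1.symm, Or.inr ⟨h2, h⟩⟩
  · rw [mem_fwd_B_co]
    constructor
    · rintro ⟨h', -⟩
      rw [h] at h'
      exact absurd h' (by simp)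
    · intro hx
      exact absurd hx (by simp)
  · rw [mem_fwd_B_e]
    exact ⟨False.elim, fun hx => absurd hx (by simp [cee])⟩

lemma fwd_CM_C1 {i : Fin n2} (h : f i ≠ none) :
    CM (fwdM nb1 nb2 f E) (stC i) = {cd2 i} := by
  ext c
  rw [mem_CM, Finset.mem_singleton]
  rcases c with ⟨i2, r⟩ | j2 | u
  · rw [mem_fwd_C_d]
    constructor
    · rintro ⟨rfl, ⟨rfl, -⟩ | ⟨-, hf, -⟩⟩
      · rfl
      · exact absurd hf h
    · intro hx
      injection hx with hx'
      injection hx' with h1 h2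
      exact ⟨h1.symm, Or.inl ⟨h2, h⟩⟩
  · rw [mem_fwd_C_co]
    exact ⟨False.elim, fun hx => absurd hx (by simp)⟩
  · rw [mem_fwd_C_e]
    constructor
    · rintro ⟨hf, -⟩
      exact absurd hf h
    · intro hx
      exact absurd hx (by simp [cee])

lemma fwd_CM_C2 {i : Fin n2} (h : f i = none) (hiE : i ∈ E) :
    CM (fwdM nb1 nb2 f E) (stC i) = {cee} := by
  ext c
  rw [mem_CM, Finset.mem_singleton]
  rcases c with ⟨i2, r⟩ | j2 | u
  · rw [mem_fwd_C_d]
    constructor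
    · rintro ⟨rfl, ⟨-, hf⟩ | ⟨-, -, hE'⟩⟩
      · exact absurd h hf
      · exact absurd hiE hE'
    · intro hx
      exact absurd hx (by simp [cee])
  · rw [mem_fwd_C_co]
    exact ⟨False.elim, fun hx => absurd hx (by simp [cee])⟩
  · rw [mem_fwd_C_e]
    exact ⟨fun _ => rfl, fun _ => ⟨h, hiE⟩⟩

lemma fwd_CM_C3 {i : Fin n2} (h : f i = none) (hiE : i ∉ E) :
    CM (fwdM nb1 nb2 f E) (stC i) = {cd3 i} := by
  ext c
  rw [mem_CM, Finset.mem_singleton]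
  rcases c with ⟨i2, r⟩ | j2 | u
  · rw [mem_fwd_C_d]
    constructor
    · rintro ⟨rfl, ⟨-, hf⟩ | ⟨rfl, -, -⟩⟩
      · exact absurd h hf
      · rfl
    · intro hx
      injection hx with hx'
      injection hx' with h1 h2
      exact ⟨h1.symm, Or.inr ⟨h2, h, hiE⟩⟩
  · rw [mem_fwd_C_co]
    exact ⟨False.elim, fun hx => absurd hx (by simp)⟩
  · rw [mem_fwd_C_e]
    constructor
    · rintro ⟨-, hE'⟩
      exact absurd hE' hiE
    · intro hx
      exact absurd hx (by simp [cee])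

lemma fwd_CM_D1 {i : Fin n2} (h : f i ≠ none ∨ i ∈ E) :
    CM (fwdM nb1 nb2 f E) (stD i) = {cd3 i} := by
  ext c
  rw [mem_CM, Finset.mem_singleton]
  rcases c with ⟨i2, r⟩ | j2 | u
  · rw [mem_fwd_D_d]
    constructor
    · rintro ⟨rfl, rfl, -⟩
      rfl
    · intro hx
      injection hx with hx'
      injection hx' with h1 h2
      exact ⟨h1.symm, h2, h⟩
  · rw [mem_fwd_D_co]
    exact ⟨False.elim, fun hx => absurd hx (by simp)⟩
  · rw [mem_fwd_D_e]
    exact ⟨False.elim, fun hx => absurd hx (by simp [cee])⟩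

lemma fwd_CM_D2 {i : Fin n2} (h : f i = none) (hiE : i ∉ E) :
    CM (fwdM nb1 nb2 f E) (stD i) = ∅ := by
  ext c
  simp only [Finset.notMem_empty, iff_false]
  rw [mem_CM]
  rcases c with ⟨i2, r⟩ | j2 | u
  · rw [mem_fwd_D_d]
    rintro ⟨rfl, -, hf | hE'⟩
    · exact absurd h hf
    · exact absurd hE' hiE
  · rw [mem_fwd_D_co]
    exact False.elim
  · rw [mem_fwd_D_e]
    exact False.elim

lemma fwd_CM_P1 {j : Fin n1} (h : ∀ i, f i ≠ some j) :
    CM (fwdM nb1 nb2 f E) (stP j) = {cco j} := by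
  ext c
  rw [mem_CM, Finset.mem_singleton]
  rcases c with ⟨i2, r⟩ | j2 | u
  · rw [mem_fwd_P_d]
    exact ⟨False.elim, fun hx => absurd hx (by simp)⟩
  · rw [mem_fwd_P_co]
    constructor
    · rintro ⟨rfl, -⟩
      rfl
    · intro hx
      injection hx with hx'
      injection hx' with hx''
      exact ⟨hx''.symm ▸ rfl, hx''.symm ▸ h⟩
  · rw [mem_fwd_P_e]
    exact ⟨False.elim, fun hx => absurd hx (by simp [cee])⟩

lemma fwd_CM_P2 {j : Fin n1} {i : Fin n2} (h : f i = some j) :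
    CM (fwdM nb1 nb2 f E) (stP j) = ∅ := by
  ext c
  simp only [Finset.notMem_empty, iff_false]
  rw [mem_CM]
  rcases c with ⟨i2, r⟩ | j2 | u
  · rw [mem_fwd_P_d]
    exact False.elim
  · rw [mem_fwd_P_co]
    rintro ⟨rfl, h'⟩
    exact absurd h (h' i)
  · rw [mem_fwd_P_e]
    exact False.elim

end SMCM

lemma stC_injective : Function.Injective (stC (n1 := n1) (n2 := n2)) :=
  fun _ _ h => stl_eq_iff.mp h

lemma fwd_isMatching (hnb : ∀ i, nb1 i < nb2 i) (hmat : GMatching nb1 nb2 f)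
    (hEnone : ∀ i ∈ E, f i = none) (hEcard : E.card = n2 - K) :
    (I16 nb1 nb2 K).IsMatching (fwdM nb1 nb2 f E) := by
  refine ⟨?_, ?_, ?_⟩
  · rintro ⟨s, c⟩ hp
    rw [mem_fwdM] at hp
    show acc16 nb1 nb2 s c
    rcases s with ⟨i, t⟩ | j
    · rcases c with ⟨i', r⟩ | j' | u
      · obtain ⟨rfl, hc⟩ := hp
        fin_cases t <;> simp_all [fwdPred, acc16] <;> tauto
      · fin_cases t <;> simp_all [fwdPred, acc16] <;> tauto
      · exact hp.1
    · rcases c with ⟨i', r⟩ | j' | u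
      · exact hp.elim
      · exact hp.1
      · exact hp.elim
  · intro s
    rcases S16_cases s with ⟨i, rfl⟩ | ⟨i, rfl⟩ | ⟨i, rfl⟩ | ⟨i, rfl⟩ | ⟨j, rfl⟩
    · by_cases hf : f i = some (nb1 i)
      · rw [fwd_CM_A1 nb1 nb2 hf]
        norm_num [CA.O, I16_credits, I16_limit]
      · rw [fwd_CM_A2 nb1 nb2 hf]
        norm_num [CA.O, I16_credits, I16_limit]
    · rcases hfo : f i with _ | j0
      · rw [fwd_CM_B3 nb1 nb2 hfo]
        norm_num [CA.O, I16_credits, I16_limit]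
      · rcases hmat.1 i j0 hfo with rfl | rfl
        · rw [fwd_CM_B1 nb1 nb2 hnb hfo]
          norm_num [CA.O, I16_credits, I16_limit]
        · rw [fwd_CM_B2 nb1 nb2 hnb hfo]
          norm_num [CA.O, I16_credits, I16_limit]
    · rcases hfo : f i with _ | j0
      · by_cases hiE : i ∈ E
        · rw [fwd_CM_C2 nb1 nb2 hfo hiE]
          norm_num [CA.O, I16_credits, I16_limit]
        · rw [fwd_CM_C3 nb1 nb2 hfo hiE]
          norm_num [CA.O, I16_credits, I16_limit]
      · rw [fwd_CM_C1 nb1 nb2 (by rw [hfo]; simp)]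
        norm_num [CA.O, I16_credits, I16_limit]
    · by_cases hor : f i ≠ none ∨ i ∈ E
      · rw [fwd_CM_D1 nb1 nb2 hor]
        norm_num [CA.O, I16_credits, I16_limit]
      · push_neg at hor
        rw [fwd_CM_D2 nb1 nb2 hor.1 hor.2]
        norm_num [CA.O, I16_credits, I16_limit]
    · by_cases hj : ∃ i, f i = some j
      · obtain ⟨i', hi'⟩ := hj
        rw [fwd_CM_P2 nb1 nb2 hi']
        norm_num [CA.O, I16_credits, I16_limit]
      · push_neg at hj
        rw [fwd_CM_P1 nb1 nb2 hj]
        norm_num [CA.O, I16_credits, I16_limit]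
  · intro c
    rcases C16_cases c with ⟨i, rfl⟩ | ⟨i, rfl⟩ | ⟨i, rfl⟩ | ⟨j, rfl⟩ | rfl
    · rw [fwd_SM_d1]
      split <;> simp [I16_quota]
    · rw [fwd_SM_d2]
      split <;> simp [I16_quota]
    · rw [fwd_SM_d3]
      split <;> simp [I16_quota]
    · by_cases hj : ∃ i, f i = some j
      · obtain ⟨i', hi'⟩ := hj
        rcases hmat.1 i' j hi' with h1 | h2
        · rw [fwd_SM_co1 nb1 nb2 hnb hmat hi' h1]
          simp [I16_quota]
        · rw [fwd_SM_co2 nb1 nb2 hnb hmat hi' h2]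
          simp [I16_quota]
      · push_neg at hj
        rw [fwd_SM_co_none nb1 nb2 hj]
        simp [I16_quota]
    · rw [fwd_SM_e nb1 nb2 hEnone, Finset.card_image_of_injective _ stC_injective, hEcard]
      simp [I16_quota]

lemma fwd_courseComplete (hnb : ∀ i, nb1 i < nb2 i) (hmat : GMatching nb1 nb2 f)
    (hEnone : ∀ i ∈ E, f i = none) (hEcard : E.card = n2 - K) :
    (I16 nb1 nb2 K).CourseComplete (fwdM nb1 nb2 f E) := by
  intro c
  rcases C16_cases c with ⟨i, rfl⟩ | ⟨i, rfl⟩ | ⟨i, rfl⟩ | ⟨j, rfl⟩ | rfl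
  · rw [fwd_SM_d1]
    split <;> simp [I16_quota]
  · rw [fwd_SM_d2]
    split <;> simp [I16_quota]
  · rw [fwd_SM_d3]
    split <;> simp [I16_quota]
  · by_cases hj : ∃ i, f i = some j
    · obtain ⟨i', hi'⟩ := hj
      rcases hmat.1 i' j hi' with h1 | h2
      · rw [fwd_SM_co1 nb1 nb2 hnb hmat hi' h1]
        simp [I16_quota]
      · rw [fwd_SM_co2 nb1 nb2 hnb hmat hi' h2]
        simp [I16_quota]
    · push_neg at hj
      rw [fwd_SM_co_none nb1 nb2 hj]
      simp [I16_quota]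
  · rw [fwd_SM_e nb1 nb2 hEnone, Finset.card_image_of_injective _ stC_injective, hEcard]
    simp [I16_quota]

lemma fwd_stable (hnb : ∀ i, nb1 i < nb2 i) (hgm : GMaximal nb1 nb2 f)
    (hEnone : ∀ i ∈ E, f i = none) :
    (I16 nb1 nb2 K).FirstCoalitionStable noF (fwdM nb1 nb2 f E) := by
  obtain ⟨hmat, hmax⟩ := hgm
  intro s B hblock
  obtain ⟨hBne, hBacc, hBwants, D, hD, ⟨b, hbB, hbpref⟩, hOD, hlim, -⟩ := hblock
  rcases S16_cases s with ⟨i, rfl⟩ | ⟨i, rfl⟩ | ⟨i, rfl⟩ | ⟨i, rfl⟩ | ⟨j, rfl⟩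
  · -- student s_i^1
    by_cases hf : f i = some (nb1 i)
    · rw [fwd_CM_A1 nb1 nb2 hf] at hD hlim
      have hBeq : B = {cd1 i} := by
        have hBsub : B ⊆ {cd1 i} := by
          intro c hc
          obtain ⟨hac, hnm⟩ := hBacc c hc
          rcases accA_inv nb1 nb2 hac with rfl | rfl
          · exact absurd ((mem_fwd_A_co nb1 nb2).mpr ⟨hf, rfl⟩) hnm
          · exact Finset.mem_singleton.mpr rfl
        rcases Finset.subset_singleton_iff.mp hBsub with rfl | h
        · exact absurd hBne (by simp)
        · exact h
      rcases Finset.subset_singleton_iff.mp hD with rfl | rfl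
      · rw [hBeq] at hlim
        norm_num [CA.O, I16_credits, I16_limit] at hlim
      · have hb' : b = cd1 i := by rw [hBeq] at hbB; simpa using hbB
        subst hb'
        exact absurd (hbpref (cco (nb1 i)) (Finset.mem_singleton_self _))
          (not_sPref16 nb1 nb2 K (by simp))
    · rw [fwd_CM_A2 nb1 nb2 hf] at hD hlim
      have hBeq : B = {cco (nb1 i)} := by
        have hBsub : B ⊆ {cco (nb1 i)} := by
          intro c hc
          obtain ⟨hac, hnm⟩ := hBacc c hc
          rcases accA_inv nb1 nb2 hac with rfl | rfl
          · exact Finset.mem_singleton.mpr rfl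
          · exact absurd ((mem_fwd_A_d nb1 nb2).mpr ⟨rfl, rfl, hf⟩) hnm
        rcases Finset.subset_singleton_iff.mp hBsub with rfl | h
        · exact absurd hBne (by simp)
        · exact h
      rcases Finset.subset_singleton_iff.mp hD with rfl | rfl
      · rw [hBeq] at hlim
        norm_num [CA.O, I16_credits, I16_limit] at hlim
      · rw [hBeq] at hOD
        norm_num [CA.O, I16_credits] at hOD
  · -- student s_i^2
    rcases hfo : f i with _ | j0
    · -- f i = none
      rw [fwd_CM_B3 nb1 nb2 hfo] at hD hlim
      have hne1 : f i ≠ some (nb1 i) := by rw [hfo]; simp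
      have hSM1 : SM (fwdM nb1 nb2 f E) (cd1 i) = {stA i} := by
        rw [fwd_SM_d1 nb1 nb2, if_neg hne1]
      have hBeq : B = {cco (nb2 i)} := by
        have hBsub : B ⊆ {cco (nb2 i)} := by
          intro c hc
          obtain ⟨hac, hnm⟩ := hBacc c hc
          rcases accB_inv nb1 nb2 hac with rfl | rfl | rfl
          · exact Finset.mem_singleton.mpr rfl
          · exact absurd (hBwants _ hc) (not_wants16 nb1 nb2 K hSM1 rfl
              (not_cPref16 nb1 nb2 K (by simp only [mrank_A, mrank_B]; omega)))
          · exact absurd ((mem_fwd_B_d nb1 nb2).mpr ⟨rfl, Or.inr ⟨rfl, hfo⟩⟩) hnm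
        rcases Finset.subset_singleton_iff.mp hBsub with rfl | h
        · exact absurd hBne (by simp)
        · exact h
      rcases Finset.subset_singleton_iff.mp hD with rfl | rfl
      · rw [hBeq] at hlim
        norm_num [CA.O, I16_credits, I16_limit] at hlim
      · rw [hBeq] at hOD
        norm_num [CA.O, I16_credits] at hOD
    · rcases hmat.1 i j0 hfo with rfl | rfl
      · -- f i = some (nb1 i)
        rw [fwd_CM_B1 nb1 nb2 hnb hfo] at hD hlim
        have hBsub : B ⊆ {cco (nb2 i), cd2 i} := by
          intro c hc
          obtain ⟨hac, hnm⟩ := hBacc c hc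
          rcases accB_inv nb1 nb2 hac with rfl | rfl | rfl
          · exact Finset.mem_insert_self _ _
          · exact absurd ((mem_fwd_B_d nb1 nb2).mpr ⟨rfl, Or.inl ⟨rfl, hfo⟩⟩) hnm
          · exact Finset.mem_insert_of_mem (Finset.mem_singleton_self _)
        rcases Finset.subset_singleton_iff.mp hD with rfl | rfl
        · have hpos := (I16 nb1 nb2 K).O_pos hBne
          have h1 : (I16 nb1 nb2 K).O {cd1 i} = 2 := by norm_num [CA.O, I16_credits]
          have h2 : (I16 (n1 := n1) nb1 nb2 K).limit (stB i) = 2 := by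
            norm_num [I16_limit]
          rw [h1, CA.O_empty, h2] at hlim
          linarith
        · rcases subset_pair_cases hBsub with rfl | rfl | rfl | rfl
          · exact absurd hBne (by simp)
          · rw [show ((I16 nb1 nb2 K).O {cco (nb2 i)}) = 1 from by
              norm_num [CA.O, I16_credits]] at hOD
            norm_num [CA.O, I16_credits] at hOD
          · have hb' : b = cd2 i := by simpa using hbB
            subst hb'
            exact absurd (hbpref (cd1 i) (Finset.mem_singleton_self _))
              (not_sPref16 nb1 nb2 K (by simp only [srank_B_d1, srank_B_d2]; omega))
          · rw [CA.O_pair _ (by simp)] at hlim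
            norm_num [CA.O, I16_credits, I16_limit] at hlim
      · -- f i = some (nb2 i)
        rw [fwd_CM_B2 nb1 nb2 hnb hfo] at hD hlim
        have hne1 : f i ≠ some (nb1 i) := by
          rw [hfo]
          exact fun hh => (hnb i).ne' (Option.some.inj hh)
        have hSM1 : SM (fwdM nb1 nb2 f E) (cd1 i) = {stA i} := by
          rw [fwd_SM_d1 nb1 nb2, if_neg hne1]
        have hBeq : B = {cd2 i} := by
          have hBsub : B ⊆ {cd2 i} := by
            intro c hc
            obtain ⟨hac, hnm⟩ := hBacc c hc
            rcases accB_inv nb1 nb2 hac with rfl | rfl | rfl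
            · exact absurd ((mem_fwd_B_co nb1 nb2).mpr ⟨hfo, rfl⟩) hnm
            · exact absurd (hBwants _ hc) (not_wants16 nb1 nb2 K hSM1 rfl
                (not_cPref16 nb1 nb2 K (by simp only [mrank_A, mrank_B]; omega)))
            · exact Finset.mem_singleton.mpr rfl
          rcases Finset.subset_singleton_iff.mp hBsub with rfl | h
          · exact absurd hBne (by simp)
          · exact h
        rcases Finset.subset_singleton_iff.mp hD with rfl | rfl
        · rw [hBeq] at hlim
          norm_num [CA.O, I16_credits, I16_limit] at hlim
        · have hb' : b = cd2 i := by rw [hBeq] at hbB; simpa using hbB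
          subst hb'
          exact absurd (hbpref (cco (nb2 i)) (Finset.mem_singleton_self _))
            (not_sPref16 nb1 nb2 K (by simp only [srank_B_co, srank_B_d2]; omega))
  · -- student s_i^3
    rcases hfo : f i with _ | j0
    · -- f i = none
      have hne1 : f i ≠ some (nb1 i) := by rw [hfo]; simp
      have hSM2 : SM (fwdM nb1 nb2 f E) (cd2 i) = {stB i} := by
        rw [fwd_SM_d2 nb1 nb2, if_pos hfo]
      have hwd2 : ¬ (I16 nb1 nb2 K).Wants (fwdM nb1 nb2 f E) (stC i) (cd2 i) :=
        not_wants16 nb1 nb2 K hSM2 rfl (not_cPref16 nb1 nb2 K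
          (by simp only [mrank_B, mrank_C]; have := i.isLt; omega))
      have hco : ∀ j, (j = nb1 i ∨ j = nb2 i) →
          ¬ (I16 nb1 nb2 K).Wants (fwdM nb1 nb2 f E) (stC i) (cco j) := by
        intro j hj
        obtain ⟨i', hi'⟩ := hmax i hfo j hj
        rcases hmat.1 i' j hi' with h1 | h2
        · exact not_wants16 nb1 nb2 K (fwd_SM_co1 nb1 nb2 hnb hmat hi' h1) rfl
            (not_cPref16 nb1 nb2 K
              (by simp only [mrank_A, mrank_C]; have := i'.isLt; omega))
        · exact not_wants16 nb1 nb2 K (fwd_SM_co2 nb1 nb2 hnb hmat hi' h2) rfl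
            (not_cPref16 nb1 nb2 K
              (by simp only [mrank_B, mrank_C]; have := i'.isLt; omega))
      by_cases hiE : i ∈ E
      · rw [fwd_CM_C2 nb1 nb2 hfo hiE] at hD hlim
        have hBeq : B = {cd3 i} := by
          have hBsub : B ⊆ {cd3 i} := by
            intro c hc
            obtain ⟨hac, hnm⟩ := hBacc c hc
            rcases accC_inv nb1 nb2 hac with rfl | rfl | rfl | rfl | rfl
            · exact absurd (hBwants _ hc) hwd2
            · exact Finset.mem_singleton.mpr rfl
            · exact absurd (hBwants _ hc) (hco _ (Or.inl rfl))
            · exact absurd (hBwants _ hc) (hco _ (Or.inr rfl))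
            · exact absurd ((mem_fwd_C_e nb1 nb2).mpr ⟨hfo, hiE⟩) hnm
          rcases Finset.subset_singleton_iff.mp hBsub with rfl | h
          · exact absurd hBne (by simp)
          · exact h
        rcases Finset.subset_singleton_iff.mp hD with rfl | rfl
        · rw [hBeq] at hlim
          norm_num [CA.O, I16_credits, I16_limit] at hlim
        · rw [hBeq] at hOD
          norm_num [CA.O, I16_credits] at hOD
      · rw [fwd_CM_C3 nb1 nb2 hfo hiE] at hD hlim
        have hBeq : B = {cee} := by
          have hBsub : B ⊆ {cee} := by
            intro c hc
            obtain ⟨hac, hnm⟩ := hBacc c hc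
            rcases accC_inv nb1 nb2 hac with rfl | rfl | rfl | rfl | rfl
            · exact absurd (hBwants _ hc) hwd2
            · exact absurd ((mem_fwd_C_d nb1 nb2).mpr ⟨rfl, Or.inr ⟨rfl, hfo, hiE⟩⟩) hnm
            · exact absurd (hBwants _ hc) (hco _ (Or.inl rfl))
            · exact absurd (hBwants _ hc) (hco _ (Or.inr rfl))
            · exact Finset.mem_singleton.mpr rfl
          rcases Finset.subset_singleton_iff.mp hBsub with rfl | h
          · exact absurd hBne (by simp)
          · exact h
        rcases Finset.subset_singleton_iff.mp hD with rfl | rfl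
        · rw [hBeq] at hlim
          norm_num [CA.O, I16_credits, I16_limit] at hlim
        · have hb' : b = cee := by rw [hBeq] at hbB; simpa using hbB
          subst hb'
          exact absurd (hbpref (cd3 i) (Finset.mem_singleton_self _))
            (not_sPref16 nb1 nb2 K (by simp only [srank_C_d3, srank_C_e]; omega))
    · -- f i = some j0
      have hne : f i ≠ none := by rw [hfo]; simp
      rw [fwd_CM_C1 nb1 nb2 hne] at hD hlim
      rcases Finset.subset_singleton_iff.mp hD with rfl | rfl
      · have hpos := (I16 nb1 nb2 K).O_pos hBne
        have h1 : (I16 nb1 nb2 K).O {cd2 i} = 2 := by norm_num [CA.O, I16_credits]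
        have h2 : (I16 (n1 := n1) nb1 nb2 K).limit (stC i) = 2 := by norm_num [I16_limit]
        rw [h1, CA.O_empty, h2] at hlim
        linarith
      · have hp := hbpref (cd2 i) (Finset.mem_singleton_self _)
        obtain ⟨hac, hnm⟩ := hBacc b hbB
        rcases accC_inv nb1 nb2 hac with rfl | rfl | rfl | rfl | rfl
        · exact absurd ((mem_fwd_C_d nb1 nb2).mpr ⟨rfl, Or.inl ⟨rfl, hne⟩⟩) hnm
        · exact absurd hp (not_sPref16 nb1 nb2 K
            (by simp only [srank_C_d2, srank_C_d3]; omega))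
        · exact absurd hp (not_sPref16 nb1 nb2 K
            (by have := srank_C_co_ge nb1 nb2 i (nb1 i)
                simp only [srank_C_d2]; omega))
        · exact absurd hp (not_sPref16 nb1 nb2 K
            (by have := srank_C_co_ge nb1 nb2 i (nb2 i)
                simp only [srank_C_d2]; omega))
        · exact absurd hp (not_sPref16 nb1 nb2 K
            (by simp only [srank_C_d2, srank_C_e]; omega))
  · -- student s_i^4
    obtain ⟨c, hc⟩ := hBne
    obtain ⟨hac, hnm⟩ := hBacc c hc
    obtain rfl := accD_inv nb1 nb2 hac
    by_cases hor : f i ≠ none ∨ i ∈ E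
    · exact absurd ((mem_fwd_D_d nb1 nb2).mpr ⟨rfl, rfl, hor⟩) hnm
    · push_neg at hor
      have hSM3 : SM (fwdM nb1 nb2 f E) (cd3 i) = {stC i} := by
        rw [fwd_SM_d3 nb1 nb2, if_pos ⟨hor.1, hor.2⟩]
      exact absurd (hBwants _ hc) (not_wants16 nb1 nb2 K hSM3 rfl
        (not_cPref16 nb1 nb2 K
          (by simp only [mrank_C, mrank_D]; have := i.isLt; omega)))
  · -- student p_j
    obtain ⟨c, hc⟩ := hBne
    obtain ⟨hac, hnm⟩ := hBacc c hc
    obtain rfl := accP_inv nb1 nb2 hac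
    by_cases hj : ∃ i, f i = some j
    · obtain ⟨i', hi'⟩ := hj
      rcases hmat.1 i' j hi' with h1 | h2
      · exact absurd (hBwants _ hc) (not_wants16 nb1 nb2 K (fwd_SM_co1 nb1 nb2 hnb hmat hi' h1) rfl
          (not_cPref16 nb1 nb2 K
            (by simp only [mrank_A, mrank_P]; have := i'.isLt; omega)))
      · exact absurd (hBwants _ hc) (not_wants16 nb1 nb2 K (fwd_SM_co2 nb1 nb2 hnb hmat hi' h2) rfl
          (not_cPref16 nb1 nb2 K
            (by simp only [mrank_B, mrank_P]; have := i'.isLt; omega)))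
    · push_neg at hj
      exact absurd ((mem_fwd_P_co nb1 nb2).mpr ⟨rfl, hj⟩) hnm

/-- The forward direction of Statement 16. -/
lemma fwd_main (hnb : ∀ i, nb1 i < nb2 i) (hK : K ≤ n2) {f : Fin n2 → Option (Fin n1)}
    (hgm : GMaximal nb1 nb2 f) (hsz : GSize f ≤ K) :
    ∃ M : Finset (S16 n1 n2 × C16 n1 n2),
      (I16 nb1 nb2 K).IsMatching M ∧ (I16 nb1 nb2 K).CourseComplete M ∧
      (I16 nb1 nb2 K).FirstCoalitionStable noF M := by
  classical
  have hsplit : (Finset.univ.filter fun i => ¬ f i ≠ none).card + GSize f = n2 := by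
    have := Finset.card_filter_add_card_filter_not
      (s := (Finset.univ : Finset (Fin n2))) (p := fun i => f i ≠ none)
    rw [Finset.card_univ, Fintype.card_fin] at this
    unfold GSize
    omega
  have hle : n2 - K ≤ (Finset.univ.filter fun i => ¬ f i ≠ none).card := by omega
  obtain ⟨E, hEsub, hEcard⟩ := Finset.exists_subset_card_eq hle
  have hEnone : ∀ i ∈ E, f i = none := by
    intro i hi
    have := (Finset.mem_filter.mp (hEsub hi)).2
    simpa using this
  exact ⟨fwdM nb1 nb2 f E, fwd_isMatching nb1 nb2 K hnb hgm.1 hEnone hEcard,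
    fwd_courseComplete nb1 nb2 K hnb hgm.1 hEnone hEcard,
    fwd_stable nb1 nb2 K hnb hgm hEnone⟩

end Forward




/-! ### The backward direction: from a stable matching to a small maximal matching -/

section Backward
open Finset
variable {n1 n2 : ℕ} (nb1 nb2 : Fin n2 → Fin n1) (K : ℕ)
variable {M : Finset (S16 n1 n2 × C16 n1 n2)}

/-! acceptability facts -/

lemma accA_d1 (i : Fin n2) : acc16 nb1 nb2 (stA (n1 := n1) i) (cd1 i) := by simp [acc16]
lemma accA_co (i : Fin n2) : acc16 nb1 nb2 (stA (n1 := n1) i) (cco (nb1 i)) := by simp [acc16]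
lemma accB_d1 (i : Fin n2) : acc16 nb1 nb2 (stB (n1 := n1) i) (cd1 i) := by simp [acc16]
lemma accB_d2 (i : Fin n2) : acc16 nb1 nb2 (stB (n1 := n1) i) (cd2 i) := by simp [acc16]
lemma accB_co (i : Fin n2) : acc16 nb1 nb2 (stB (n1 := n1) i) (cco (nb2 i)) := by simp [acc16]
lemma accC_d2 (i : Fin n2) : acc16 nb1 nb2 (stC (n1 := n1) i) (cd2 i) := by simp [acc16]
lemma accC_d3 (i : Fin n2) : acc16 nb1 nb2 (stC (n1 := n1) i) (cd3 i) := by simp [acc16]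
lemma accC_e (i : Fin n2) : acc16 nb1 nb2 (stC (n1 := n1) i) (cee) := by simp [acc16]
lemma accC_co {i : Fin n2} {j : Fin n1} (hj : j = nb1 i ∨ j = nb2 i) :
    acc16 nb1 nb2 (stC (n1 := n1) i) (cco j) := by
  rcases hj with rfl | rfl <;> simp [acc16]
lemma accD_d3 (i : Fin n2) : acc16 nb1 nb2 (stD (n1 := n1) i) (cd3 i) := by simp [acc16]
lemma accP_co (j : Fin n1) : acc16 nb1 nb2 (stP (n2 := n2) j) (cco j) := by simp [acc16]

lemma srank_C_co_le (i : Fin n2) (j : Fin n1) :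
    srank16 nb1 nb2 (stC (n1 := n1) i) (cco j) ≤ 3 := by
  have h : srank16 nb1 nb2 (stC (n1 := n1) i) (cco j) = if j = nb1 i then 2 else 3 := by
    simp [srank16]
  rw [h]
  split <;> omega

/-! generic facts about a matching -/

lemma bwd_unique (hm : (I16 nb1 nb2 K).IsMatching M) {c : C16 n1 n2} {x y : S16 n1 n2}
    (hq : quota16 (n1 := n1) (n2 := n2) K c = 1) (hx : (x, c) ∈ M) (hy : (y, c) ∈ M) :
    x = y := by
  have h1 : (SM M c).card ≤ 1 := le_trans (hm.2.2 c) (le_of_eq hq)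
  exact Finset.card_le_one.mp h1 x (mem_SM.mpr hx) y (mem_SM.mpr hy)

lemma bwd_occ (hcc : (I16 nb1 nb2 K).CourseComplete M) {c : C16 n1 n2}
    (hq : quota16 (n1 := n1) (n2 := n2) K c = 1) : ∃ x, (x, c) ∈ M := by
  have h1 : (SM M c).card = 1 := (hcc c).trans hq
  obtain ⟨x, hx⟩ := Finset.card_eq_one.mp h1
  exact ⟨x, mem_SM.mp (hx ▸ Finset.mem_singleton_self x)⟩

lemma bwd_notmem (hm : (I16 nb1 nb2 K).IsMatching M) {c : C16 n1 n2} {x s : S16 n1 n2}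
    (hq : quota16 (n1 := n1) (n2 := n2) K c = 1) (hx : (x, c) ∈ M) (hne : s ≠ x) :
    (s, c) ∉ M := fun hs => hne (bwd_unique nb1 nb2 K hm hq hs hx)

lemma bwd_two (hm : (I16 nb1 nb2 K).IsMatching M) {s : S16 n1 n2} {a b : C16 n1 n2}
    (ha : (s, a) ∈ M) (hb : (s, b) ∈ M) (hab : a ≠ b) :
    credits16 a + credits16 b ≤ limit16 s := by
  have hsub : ({a, b} : Finset (C16 n1 n2)) ⊆ CM M s := by
    intro c hc
    rcases Finset.mem_insert.mp hc with rfl | hc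
    · exact mem_CM.mpr ha
    · rw [Finset.mem_singleton] at hc
      subst hc
      exact mem_CM.mpr hb
  have h1 := (I16 nb1 nb2 K).O_mono hsub
  have h2 := hm.2.1 s
  have h3 : (I16 nb1 nb2 K).O {a, b} = credits16 a + credits16 b := (I16 nb1 nb2 K).O_pair hab
  have h4 : (I16 (n1 := n1) nb1 nb2 K).limit s = limit16 s := rfl
  rw [h4] at h2
  linarith

lemma bwd_three (hm : (I16 nb1 nb2 K).IsMatching M) {s : S16 n1 n2} {a b c : C16 n1 n2}
    (ha : (s, a) ∈ M) (hb : (s, b) ∈ M) (hc : (s, c) ∈ M)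
    (hab : a ≠ b) (hac : a ≠ c) (hbc : b ≠ c) :
    credits16 a + credits16 b + credits16 c ≤ limit16 s := by
  have hsub : ({a, b, c} : Finset (C16 n1 n2)) ⊆ CM M s := by
    intro d hd
    rcases Finset.mem_insert.mp hd with rfl | hd
    · exact mem_CM.mpr ha
    · rcases Finset.mem_insert.mp hd with rfl | hd
      · exact mem_CM.mpr hb
      · rw [Finset.mem_singleton] at hd
        subst hd
        exact mem_CM.mpr hc
  have h1 := (I16 nb1 nb2 K).O_mono hsub
  have h2 := hm.2.1 s
  have h3 := (I16 nb1 nb2 K).O_triple hab hac hbc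
  have h4 : (I16 (n1 := n1) nb1 nb2 K).limit s = limit16 s := rfl
  have h5 : (I16 (n1 := n1) nb1 nb2 K).credits a = credits16 a := rfl
  have h6 : (I16 (n1 := n1) nb1 nb2 K).credits b = credits16 b := rfl
  have h7 : (I16 (n1 := n1) nb1 nb2 K).credits c = credits16 c := rfl
  rw [h4] at h2
  rw [h5, h6, h7] at h3
  linarith

lemma bwd_CM_empty (hm : (I16 nb1 nb2 K).IsMatching M) {s : S16 n1 n2}
    (h : ∀ c, acc16 nb1 nb2 s c → (s, c) ∉ M) : CM M s = ∅ :=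
  Finset.eq_empty_of_forall_notMem fun c hc =>
    h c (hm.1 (s, c) (mem_CM.mp hc)) (mem_CM.mp hc)

lemma bwd_CM_singleton (hm : (I16 nb1 nb2 K).IsMatching M) {s : S16 n1 n2} {x : C16 n1 n2}
    (hx : (s, x) ∈ M) (h : ∀ c, acc16 nb1 nb2 s c → c ≠ x → (s, c) ∉ M) :
    CM M s = {x} := by
  ext c
  rw [mem_CM, Finset.mem_singleton]
  constructor
  · intro hc
    by_contra hne
    exact h c (hm.1 (s, c) hc) hne hc
  · rintro rfl
    exact hx

/-! blocking-coalition constructions -/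

lemma bwd_block1 (hst : (I16 nb1 nb2 K).CoalitionStable noF M) {s : S16 n1 n2}
    {b : C16 n1 n2} (hacc : acc16 nb1 nb2 s b) (hnm : (s, b) ∉ M)
    (hw : (I16 nb1 nb2 K).Wants M s b)
    (hfit : (I16 nb1 nb2 K).O (CM M s) + credits16 b ≤ limit16 s) : False := by
  apply hst s {b}
  refine ⟨Finset.singleton_nonempty b, ?_, ?_, ∅, Finset.empty_subset _, ?_, ?_, ?_, trivial⟩
  · intro c hc
    rw [Finset.mem_singleton] at hc
    subst hc
    exact ⟨hacc, hnm⟩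
  · intro c hc
    rw [Finset.mem_singleton] at hc
    subst hc
    exact hw
  · intro c hc c' hc'
    exact absurd hc' (Finset.notMem_empty c')
  · rw [CA.O_empty]
    exact (I16 nb1 nb2 K).O_nonneg _
  · rw [CA.O_empty, CA.O_singleton]
    have h4 : (I16 (n1 := n1) nb1 nb2 K).limit s = limit16 s := rfl
    have h5 : (I16 (n1 := n1) nb1 nb2 K).credits b = credits16 b := rfl
    rw [h4, h5]
    linarith

lemma bwd_block2 (hst : (I16 nb1 nb2 K).CoalitionStable noF M) {s : S16 n1 n2}
    {b d : C16 n1 n2} (hacc : acc16 nb1 nb2 s b) (hnm : (s, b) ∉ M)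
    (hw : (I16 nb1 nb2 K).Wants M s b) (hdm : (s, d) ∈ M)
    (hpref : (I16 nb1 nb2 K).sPref s b d) (hcred : credits16 d ≤ credits16 b)
    (hfit : (I16 nb1 nb2 K).O (CM M s) - credits16 d + credits16 b ≤ limit16 s) : False := by
  apply hst s {b}
  refine ⟨Finset.singleton_nonempty b, ?_, ?_, {d}, ?_, ?_, ?_, ?_, trivial⟩
  · intro c hc
    rw [Finset.mem_singleton] at hc
    subst hc
    exact ⟨hacc, hnm⟩
  · intro c hc
    rw [Finset.mem_singleton] at hc
    subst hc
    exact hw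
  · exact Finset.singleton_subset_iff.mpr (mem_CM.mpr hdm)
  · intro c hc c' hc'
    rw [Finset.mem_singleton] at hc hc'
    subst hc
    subst hc'
    exact hpref
  · rw [CA.O_singleton, CA.O_singleton]
    exact hcred
  · rw [CA.O_singleton, CA.O_singleton]
    have h4 : (I16 (n1 := n1) nb1 nb2 K).limit s = limit16 s := rfl
    have h5 : (I16 (n1 := n1) nb1 nb2 K).credits b = credits16 b := rfl
    have h6 : (I16 (n1 := n1) nb1 nb2 K).credits d = credits16 d := rfl
    rw [h4, h5, h6]
    linarith

lemma bwd_blockpair (hst : (I16 nb1 nb2 K).CoalitionStable noF M) {s : S16 n1 n2}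
    {b1 b2 d : C16 n1 n2} (hne : b1 ≠ b2)
    (hacc1 : acc16 nb1 nb2 s b1) (hnm1 : (s, b1) ∉ M)
    (hw1 : (I16 nb1 nb2 K).Wants M s b1)
    (hacc2 : acc16 nb1 nb2 s b2) (hnm2 : (s, b2) ∉ M)
    (hw2 : (I16 nb1 nb2 K).Wants M s b2) (hdm : (s, d) ∈ M)
    (hpref1 : (I16 nb1 nb2 K).sPref s b1 d) (hpref2 : (I16 nb1 nb2 K).sPref s b2 d)
    (hcred : credits16 d ≤ credits16 b1 + credits16 b2)
    (hfit : (I16 nb1 nb2 K).O (CM M s) - credits16 d + (credits16 b1 + credits16 b2)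
      ≤ limit16 s) : False := by
  apply hst s {b1, b2}
  refine ⟨Finset.insert_nonempty _ _, ?_, ?_, {d}, ?_, ?_, ?_, ?_, trivial⟩
  · intro c hc
    rcases Finset.mem_insert.mp hc with rfl | hc
    · exact ⟨hacc1, hnm1⟩
    · rw [Finset.mem_singleton] at hc
      subst hc
      exact ⟨hacc2, hnm2⟩
  · intro c hc
    rcases Finset.mem_insert.mp hc with rfl | hc
    · exact hw1
    · rw [Finset.mem_singleton] at hc
      subst hc
      exact hw2
  · exact Finset.singleton_subset_iff.mpr (mem_CM.mpr hdm)
  · intro c hc c' hc'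
    rw [Finset.mem_singleton] at hc'
    subst hc'
    rcases Finset.mem_insert.mp hc with rfl | hc
    · exact hpref1
    · rw [Finset.mem_singleton] at hc
      subst hc
      exact hpref2
  · rw [CA.O_singleton, (I16 nb1 nb2 K).O_pair hne]
    exact hcred
  · rw [CA.O_singleton, (I16 nb1 nb2 K).O_pair hne]
    have h4 : (I16 (n1 := n1) nb1 nb2 K).limit s = limit16 s := rfl
    have h6 : (I16 (n1 := n1) nb1 nb2 K).credits d = credits16 d := rfl
    have h7 : (I16 (n1 := n1) nb1 nb2 K).credits b1 = credits16 b1 := rfl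
    have h8 : (I16 (n1 := n1) nb1 nb2 K).credits b2 = credits16 b2 := rfl
    rw [h4, h6, h7, h8]
    linarith

/-! structural facts about a course-complete stable matching -/

lemma bwd_d1 (hm : (I16 nb1 nb2 K).IsMatching M) (hcc : (I16 nb1 nb2 K).CourseComplete M)
    (i : Fin n2) : (stA i, cd1 i) ∈ M ∨ (stB i, cd1 i) ∈ M := by
  obtain ⟨x, hx⟩ := bwd_occ nb1 nb2 K hcc (c := cd1 i) rfl
  rcases acc_d_inv nb1 nb2 (hm.1 _ hx) with ⟨-, h⟩ | ⟨h0, -⟩ | ⟨h0, -⟩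
  · rcases h with rfl | rfl
    · exact Or.inl hx
    · exact Or.inr hx
  · exact absurd h0 (by decide)
  · exact absurd h0 (by decide)

lemma bwd_d2 (hm : (I16 nb1 nb2 K).IsMatching M) (hcc : (I16 nb1 nb2 K).CourseComplete M)
    (i : Fin n2) : (stB i, cd2 i) ∈ M ∨ (stC i, cd2 i) ∈ M := by
  obtain ⟨x, hx⟩ := bwd_occ nb1 nb2 K hcc (c := cd2 i) rfl
  rcases acc_d_inv nb1 nb2 (hm.1 _ hx) with ⟨h0, -⟩ | ⟨-, h⟩ | ⟨h0, -⟩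
  · exact absurd h0 (by decide)
  · rcases h with rfl | rfl
    · exact Or.inl hx
    · exact Or.inr hx
  · exact absurd h0 (by decide)

lemma bwd_d3 (hm : (I16 nb1 nb2 K).IsMatching M) (hcc : (I16 nb1 nb2 K).CourseComplete M)
    (i : Fin n2) : (stC i, cd3 i) ∈ M ∨ (stD i, cd3 i) ∈ M := by
  obtain ⟨x, hx⟩ := bwd_occ nb1 nb2 K hcc (c := cd3 i) rfl
  rcases acc_d_inv nb1 nb2 (hm.1 _ hx) with ⟨h0, -⟩ | ⟨h0, -⟩ | ⟨-, h⟩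
  · exact absurd h0 (by decide)
  · exact absurd h0 (by decide)
  · rcases h with rfl | rfl
    · exact Or.inl hx
    · exact Or.inr hx

lemma bwd_K1 (hm : (I16 nb1 nb2 K).IsMatching M) (hcc : (I16 nb1 nb2 K).CourseComplete M)
    {i : Fin n2} (h : (stA i, cco (nb1 i)) ∈ M) :
    (stB i, cd1 i) ∈ M ∧ (stC i, cd2 i) ∈ M := by
  have hd1 : (stB i, cd1 i) ∈ M := by
    rcases bwd_d1 nb1 nb2 K hm hcc i with hA | hB
    · exact absurd (bwd_two nb1 nb2 K hm h hA (by simp)) (by norm_num)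
    · exact hB
  have hd2 : (stC i, cd2 i) ∈ M := by
    rcases bwd_d2 nb1 nb2 K hm hcc i with hB | hC
    · exact absurd (bwd_two nb1 nb2 K hm hd1 hB (crl_ne (by decide))) (by norm_num)
    · exact hC
  exact ⟨hd1, hd2⟩

lemma bwd_K2 (hm : (I16 nb1 nb2 K).IsMatching M) (hcc : (I16 nb1 nb2 K).CourseComplete M)
    {i : Fin n2} (h : (stB i, cco (nb2 i)) ∈ M) :
    (stA i, cd1 i) ∈ M ∧ (stC i, cd2 i) ∈ M := by
  have hd1 : (stA i, cd1 i) ∈ M := by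
    rcases bwd_d1 nb1 nb2 K hm hcc i with hA | hB
    · exact hA
    · exact absurd (bwd_two nb1 nb2 K hm h hB (by simp)) (by norm_num)
  have hd2 : (stC i, cd2 i) ∈ M := by
    rcases bwd_d2 nb1 nb2 K hm hcc i with hB | hC
    · exact absurd (bwd_two nb1 nb2 K hm h hB (by simp)) (by norm_num)
    · exact hC
  exact ⟨hd1, hd2⟩

lemma bwd_K3a (hm : (I16 nb1 nb2 K).IsMatching M) (hcc : (I16 nb1 nb2 K).CourseComplete M)
    (hst : (I16 nb1 nb2 K).CoalitionStable noF M) {i : Fin n2} {j : Fin n1}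
    (h : (stC i, cco j) ∈ M) : (stC i, cd3 i) ∈ M := by
  rcases bwd_d3 nb1 nb2 K hm hcc i with hC | hD
  · exact hC
  · exfalso
    have hacc : acc16 nb1 nb2 (stC (n1 := n1) i) (cco j) := hm.1 _ h
    refine bwd_block2 nb1 nb2 K hst (accC_d3 nb1 nb2 i)
      (bwd_notmem nb1 nb2 K hm rfl hD (stl_ne (by decide)))
      (Or.inr ⟨stD i, mem_SM.mpr hD, cPref16_of nb1 nb2 K (accC_d3 nb1 nb2 i)
        (accD_d3 nb1 nb2 i) (by simp only [mrank_C, mrank_D]; have := i.isLt; omega)⟩)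
      h
      (sPref16_of nb1 nb2 K (accC_d3 nb1 nb2 i) hacc
        (by have := srank_C_co_ge nb1 nb2 i j; simp only [srank_C_d3]; omega))
      (by norm_num) ?_
    have h2 := hm.2.1 (stC i)
    have h4 : (I16 (n1 := n1) nb1 nb2 K).limit (stC i) = limit16 (stC (n1 := n1) i) := rfl
    rw [h4] at h2
    simp only [credits_co, credits_d3, limit_stC] at h2 ⊢
    linarith

lemma bwd_K3b (hm : (I16 nb1 nb2 K).IsMatching M) (hcc : (I16 nb1 nb2 K).CourseComplete M)
    (hst : (I16 nb1 nb2 K).CoalitionStable noF M) {i : Fin n2} {j j' : Fin n1}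
    (h1 : (stC i, cco j) ∈ M) (h2 : (stC i, cco j') ∈ M) (hjj : j ≠ j') : False := by
  have hd3 := bwd_K3a nb1 nb2 K hm hcc hst h1
  have hne : (cco (n2 := n2) j) ≠ cco j' := by
    intro hh
    apply hjj
    injection hh with hh'
    injection hh' with hh''
  have := bwd_three nb1 nb2 K hm hd3 h1 h2 (by simp) (by simp) hne
  norm_num at this

/-- The graph matching extracted from a matching of `I16(G,K)`. -/
def bwdF (M : Finset (S16 n1 n2 × C16 n1 n2)) : Fin n2 → Option (Fin n1) := fun i =>
  if (stA i, cco (nb1 i)) ∈ M then some (nb1 i)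
  else if (stB i, cco (nb2 i)) ∈ M then some (nb2 i)
  else if (stC i, cco (nb1 i)) ∈ M then some (nb1 i)
  else if (stC i, cco (nb2 i)) ∈ M then some (nb2 i)
  else none

lemma bwdF_some {i : Fin n2} {j : Fin n1} (h : bwdF nb1 nb2 M i = some j) :
    ((stA i, cco j) ∈ M ∧ j = nb1 i) ∨ ((stB i, cco j) ∈ M ∧ j = nb2 i) ∨
      ((stC i, cco j) ∈ M ∧ (j = nb1 i ∨ j = nb2 i)) := by
  unfold bwdF at h
  split_ifs at h with h1 h2 h3 h4
  · injection h with h'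
    subst h'
    exact Or.inl ⟨h1, rfl⟩
  · injection h with h'
    subst h'
    exact Or.inr (Or.inl ⟨h2, rfl⟩)
  · injection h with h'
    subst h'
    exact Or.inr (Or.inr ⟨h3, Or.inl rfl⟩)
  · injection h with h'
    subst h'
    exact Or.inr (Or.inr ⟨h4, Or.inr rfl⟩)

lemma bwdF_none {i : Fin n2} (h : bwdF nb1 nb2 M i = none) :
    (stA i, cco (nb1 i)) ∉ M ∧ (stB i, cco (nb2 i)) ∉ M ∧
      (stC i, cco (nb1 i)) ∉ M ∧ (stC i, cco (nb2 i)) ∉ M := by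
  unfold bwdF at h
  split_ifs at h with h1 h2 h3 h4
  exact ⟨h1, h2, h3, h4⟩

lemma bwdF_A {i : Fin n2} (h : (stA i, cco (nb1 i)) ∈ M) :
    bwdF nb1 nb2 M i = some (nb1 i) := by
  unfold bwdF
  rw [if_pos h]

lemma bwdF_B (hm : (I16 nb1 nb2 K).IsMatching M) (hcc : (I16 nb1 nb2 K).CourseComplete M)
    {i : Fin n2} (h : (stB i, cco (nb2 i)) ∈ M) :
    bwdF nb1 nb2 M i = some (nb2 i) := by
  have h1 : (stA i, cco (nb1 i)) ∉ M := by
    intro hA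
    exact absurd (bwd_two nb1 nb2 K hm (bwd_K1 nb1 nb2 K hm hcc hA).1 h (by simp))
      (by norm_num)
  unfold bwdF
  rw [if_neg h1, if_pos h]

lemma bwdF_C (hnb : ∀ i, nb1 i < nb2 i) (hm : (I16 nb1 nb2 K).IsMatching M)
    (hcc : (I16 nb1 nb2 K).CourseComplete M)
    (hst : (I16 nb1 nb2 K).CoalitionStable noF M) {i : Fin n2} {j : Fin n1}
    (h : (stC i, cco j) ∈ M) (hj : j = nb1 i ∨ j = nb2 i) :
    bwdF nb1 nb2 M i = some j := by
  have h1 : (stA i, cco (nb1 i)) ∉ M := by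
    intro hA
    exact absurd (bwd_two nb1 nb2 K hm (bwd_K1 nb1 nb2 K hm hcc hA).2 h (by simp))
      (by norm_num)
  have h2 : (stB i, cco (nb2 i)) ∉ M := by
    intro hB
    exact absurd (bwd_two nb1 nb2 K hm (bwd_K2 nb1 nb2 K hm hcc hB).2 h (by simp))
      (by norm_num)
  unfold bwdF
  rw [if_neg h1, if_neg h2]
  rcases hj with rfl | rfl
  · rw [if_pos h]
  · have h3 : (stC i, cco (nb1 i)) ∉ M := fun hC1 =>
      bwd_K3b nb1 nb2 K hm hcc hst hC1 h (hnb i).ne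
    rw [if_neg h3, if_pos h]

/-- The backward direction of Statement 16. -/
lemma bwd_main (hnb : ∀ i, nb1 i < nb2 i) (hK : K ≤ n2)
    (hm : (I16 nb1 nb2 K).IsMatching M) (hcc : (I16 nb1 nb2 K).CourseComplete M)
    (hst : (I16 nb1 nb2 K).CoalitionStable noF M) :
    ∃ f, GMaximal nb1 nb2 f ∧ GSize f ≤ K := by
  classical
  refine ⟨bwdF nb1 nb2 M, ⟨⟨?_, ?_⟩, ?_⟩, ?_⟩
  · -- edges exist
    intro i j h
    rcases bwdF_some nb1 nb2 h with ⟨-, h'⟩ | ⟨-, h'⟩ | ⟨-, h'⟩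
    · exact Or.inl h'
    · exact Or.inr h'
    · exact h'
  · -- disjointness
    intro i i' j h h'
    by_contra hne
    obtain ⟨t, ht⟩ : ∃ t : Fin 4, (Sum.inl (i, t), cco j) ∈ M := by
      rcases bwdF_some nb1 nb2 h with ⟨hh, -⟩ | ⟨hh, -⟩ | ⟨hh, -⟩
      · exact ⟨0, hh⟩
      · exact ⟨1, hh⟩
      · exact ⟨2, hh⟩
    obtain ⟨t', ht'⟩ : ∃ t : Fin 4, (Sum.inl (i', t), cco j) ∈ M := by
      rcases bwdF_some nb1 nb2 h' with ⟨hh, -⟩ | ⟨hh, -⟩ | ⟨hh, -⟩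
      · exact ⟨0, hh⟩
      · exact ⟨1, hh⟩
      · exact ⟨2, hh⟩
    have hlt : (1 : ℕ) < (SM M (cco j)).card :=
      Finset.one_lt_card.mpr ⟨_, mem_SM.mpr ht, _, mem_SM.mpr ht', by
        intro hh
        injection hh with hh'
        injection hh' with hk1 hk2
        exact hne hk1⟩
    have hq := hm.2.2 (cco j)
    have hq' : (I16 (n1 := n1) nb1 nb2 K).quota (cco j) = 1 := rfl
    omega
  · -- maximality
    intro i hfi j hj
    obtain ⟨hnA, hnB, hnC1, hnC2⟩ := bwdF_none nb1 nb2 hfi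
    have hnotCj : (stC i, cco j) ∉ M := by
      rcases hj with rfl | rfl
      · exact hnC1
      · exact hnC2
    obtain ⟨x, hx⟩ := bwd_occ nb1 nb2 K hcc (c := cco j) rfl
    rcases acc_co_inv nb1 nb2 (hm.1 _ hx) with ⟨i', rfl, rfl⟩ | ⟨i', rfl, rfl⟩ |
      ⟨i', rfl, hj'⟩ | rfl
    · exact ⟨i', bwdF_A nb1 nb2 hx⟩
    · exact ⟨i', bwdF_B nb1 nb2 K hm hcc hx⟩
    · exact ⟨i', bwdF_C nb1 nb2 K hnb hm hcc hst hx hj'⟩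
    · -- the occupant of c_j is p_j: stability is violated
      exfalso
      have hA1 : (stA i, cd1 i) ∈ M := by
        rcases bwd_d1 nb1 nb2 K hm hcc i with hA | hB
        · exact hA
        · exfalso
          have hCM : CM M (stA i) = ∅ := bwd_CM_empty nb1 nb2 K hm (by
            intro c hac
            rcases accA_inv nb1 nb2 hac with rfl | rfl
            · exact hnA
            · exact bwd_notmem nb1 nb2 K hm rfl hB (stl_ne (by decide)))
          refine bwd_block1 nb1 nb2 K hst (accA_d1 nb1 nb2 i)
            (bwd_notmem nb1 nb2 K hm rfl hB (stl_ne (by decide)))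
            (Or.inr ⟨stB i, mem_SM.mpr hB, cPref16_of nb1 nb2 K (accA_d1 nb1 nb2 i)
              (accB_d1 nb1 nb2 i) (by simp only [mrank_A, mrank_B]; omega)⟩) ?_
          rw [hCM, CA.O_empty]
          norm_num
      have hB2 : (stB i, cd2 i) ∈ M := by
        rcases bwd_d2 nb1 nb2 K hm hcc i with hB | hC
        · exact hB
        · exfalso
          have hCM : CM M (stB i) = ∅ := bwd_CM_empty nb1 nb2 K hm (by
            intro c hac
            rcases accB_inv nb1 nb2 hac with rfl | rfl | rfl
            · exact hnB
            · exact bwd_notmem nb1 nb2 K hm rfl hA1 (stl_ne (by decide))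
            · exact bwd_notmem nb1 nb2 K hm rfl hC (stl_ne (by decide)))
          refine bwd_block1 nb1 nb2 K hst (accB_d2 nb1 nb2 i)
            (bwd_notmem nb1 nb2 K hm rfl hC (stl_ne (by decide)))
            (Or.inr ⟨stC i, mem_SM.mpr hC, cPref16_of nb1 nb2 K (accB_d2 nb1 nb2 i)
              (accC_d2 nb1 nb2 i) (by simp only [mrank_B, mrank_C]; have := i.isLt; omega)⟩) ?_
          rw [hCM, CA.O_empty]
          norm_num
      rcases bwd_d3 nb1 nb2 K hm hcc i with hC3 | hD3
      · -- s_i^3 holds d_i^3, and can simply add c_j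
        have hCe : (stC i, cee (n1 := n1)) ∉ M := by
          intro hE
          exact absurd (bwd_two nb1 nb2 K hm hC3 hE (by simp)) (by norm_num)
        have hCM : CM M (stC i) = {cd3 i} := bwd_CM_singleton nb1 nb2 K hm hC3 (by
          intro c hac hne
          rcases accC_inv nb1 nb2 hac with rfl | rfl | rfl | rfl | rfl
          · exact bwd_notmem nb1 nb2 K hm rfl hB2 (stl_ne (by decide))
          · exact absurd rfl hne
          · exact hnC1
          · exact hnC2
          · exact hCe)
        refine bwd_block1 nb1 nb2 K hst (accC_co nb1 nb2 hj) hnotCj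
          (Or.inr ⟨stP j, mem_SM.mpr hx, cPref16_of nb1 nb2 K (accC_co nb1 nb2 hj)
            (accP_co nb1 nb2 j) (by simp only [mrank_C, mrank_P]; have := i.isLt; omega)⟩) ?_
        rw [hCM, CA.O_singleton]
        have hr : (I16 (n1 := n1) nb1 nb2 K).credits (cd3 i) = credits16 (cd3 (n1 := n1) i) := rfl
        rw [hr]
        norm_num
      · by_cases hCe : (stC i, cee (n1 := n1)) ∈ M
        · -- s_i^3 holds e: block with {d_i^3, c_j} dropping e
          have hCM : CM M (stC i) = {cee} := bwd_CM_singleton nb1 nb2 K hm hCe (by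
            intro c hac hne
            rcases accC_inv nb1 nb2 hac with rfl | rfl | rfl | rfl | rfl
            · exact bwd_notmem nb1 nb2 K hm rfl hB2 (stl_ne (by decide))
            · exact bwd_notmem nb1 nb2 K hm rfl hD3 (stl_ne (by decide))
            · exact hnC1
            · exact hnC2
            · exact absurd rfl hne)
          refine bwd_blockpair nb1 nb2 K hst (b1 := cd3 i) (b2 := cco j) (d := cee)
            (by simp)
            (accC_d3 nb1 nb2 i) (bwd_notmem nb1 nb2 K hm rfl hD3 (stl_ne (by decide)))
            (Or.inr ⟨stD i, mem_SM.mpr hD3, cPref16_of nb1 nb2 K (accC_d3 nb1 nb2 i)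
              (accD_d3 nb1 nb2 i) (by simp only [mrank_C, mrank_D]; have := i.isLt; omega)⟩)
            (accC_co nb1 nb2 hj) hnotCj
            (Or.inr ⟨stP j, mem_SM.mpr hx, cPref16_of nb1 nb2 K (accC_co nb1 nb2 hj)
              (accP_co nb1 nb2 j) (by simp only [mrank_C, mrank_P]; have := i.isLt; omega)⟩)
            hCe
            (sPref16_of nb1 nb2 K (accC_d3 nb1 nb2 i) (accC_e nb1 nb2 i)
              (by simp only [srank_C_d3, srank_C_e]; omega))
            (sPref16_of nb1 nb2 K (accC_co nb1 nb2 hj) (accC_e nb1 nb2 i)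
              (by have := srank_C_co_le nb1 nb2 i j; simp only [srank_C_e]; omega))
            (by norm_num) ?_
          rw [hCM, CA.O_singleton]
          have hr : (I16 (n1 := n1) nb1 nb2 K).credits (cee) = credits16 (cee (n1 := n1) (n2 := n2)) := rfl
          rw [hr]
          norm_num
        · -- s_i^3 holds nothing: it can add d_i^3
          have hCM : CM M (stC i) = ∅ := bwd_CM_empty nb1 nb2 K hm (by
            intro c hac
            rcases accC_inv nb1 nb2 hac with rfl | rfl | rfl | rfl | rfl
            · exact bwd_notmem nb1 nb2 K hm rfl hB2 (stl_ne (by decide))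
            · exact bwd_notmem nb1 nb2 K hm rfl hD3 (stl_ne (by decide))
            · exact hnC1
            · exact hnC2
            · exact hCe)
          refine bwd_block1 nb1 nb2 K hst (accC_d3 nb1 nb2 i)
            (bwd_notmem nb1 nb2 K hm rfl hD3 (stl_ne (by decide)))
            (Or.inr ⟨stD i, mem_SM.mpr hD3, cPref16_of nb1 nb2 K (accC_d3 nb1 nb2 i)
              (accD_d3 nb1 nb2 i) (by simp only [mrank_C, mrank_D]; have := i.isLt; omega)⟩) ?_
          rw [hCM, CA.O_empty]
          norm_num
  · -- size bound
    have hSMe : SM M (cee) = (Finset.univ.filter fun i => (stC i, cee (n1 := n1)) ∈ M).image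
        (stC (n1 := n1)) := by
      ext x
      rw [mem_SM]
      constructor
      · intro hx
        obtain ⟨i, rfl⟩ := acc_e_inv nb1 nb2 (hm.1 _ hx)
        exact Finset.mem_image.mpr ⟨i, Finset.mem_filter.mpr ⟨Finset.mem_univ _, hx⟩, rfl⟩
      · intro hx
        obtain ⟨i, hi, rfl⟩ := Finset.mem_image.mp hx
        exact (Finset.mem_filter.mp hi).2
    have hT : (Finset.univ.filter fun i => (stC i, cee (n1 := n1)) ∈ M).card = n2 - K := by
      have h1 := hcc (cee)
      rw [hSMe, Finset.card_image_of_injective _ stC_injective] at h1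
      exact h1
    have hnotC : ∀ i, bwdF nb1 nb2 M i ≠ none → (stC i, cee (n1 := n1)) ∉ M := by
      intro i hne hCe
      obtain ⟨j, hji⟩ := Option.ne_none_iff_exists'.mp hne
      rcases bwdF_some nb1 nb2 hji with ⟨hA, rfl⟩ | ⟨hB, rfl⟩ | ⟨hC, -⟩
      · exact absurd (bwd_two nb1 nb2 K hm (bwd_K1 nb1 nb2 K hm hcc hA).2 hCe (by simp))
          (by norm_num)
      · exact absurd (bwd_two nb1 nb2 K hm (bwd_K2 nb1 nb2 K hm hcc hB).2 hCe (by simp))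
          (by norm_num)
      · exact absurd (bwd_two nb1 nb2 K hm hC hCe (by simp)) (by norm_num)
    have hsub : Finset.univ.filter (fun i => bwdF nb1 nb2 M i ≠ none) ⊆
        Finset.univ.filter (fun i => ¬ (stC i, cee (n1 := n1)) ∈ M) := by
      intro i hi
      rw [Finset.mem_filter] at hi ⊢
      exact ⟨hi.1, hnotC i hi.2⟩
    have hcard2 := Finset.card_filter_add_card_filter_not
      (s := (Finset.univ : Finset (Fin n2))) (p := fun i => (stC i, cee (n1 := n1)) ∈ M)
    rw [Finset.card_univ, Fintype.card_fin] at hcard2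
    have hle := Finset.card_le_card hsub
    unfold GSize
    omega

end Backward

/-- `G` has a maximal matching of size at most `K` iff `I16(G,K)`
admits a course-complete first-coalition-stable matching; the same equivalence holds
with coalition-stable in place of first-coalition-stable. -/
theorem maximalMatching_le_iff_courseComplete_stable
    {n1 n2 : ℕ} (nb1 nb2 : Fin n2 → Fin n1) (hnb : ∀ i, nb1 i < nb2 i)
    (K : ℕ) (hK : K ≤ n2) :
    ((∃ f, GMaximal nb1 nb2 f ∧ GSize f ≤ K) ↔
      ∃ M : Finset (S16 n1 n2 × C16 n1 n2),
        (I16 nb1 nb2 K).IsMatching M ∧ (I16 nb1 nb2 K).CourseComplete M ∧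
        (I16 nb1 nb2 K).FirstCoalitionStable noF M) ∧
    ((∃ f, GMaximal nb1 nb2 f ∧ GSize f ≤ K) ↔
      ∃ M : Finset (S16 n1 n2 × C16 n1 n2),
        (I16 nb1 nb2 K).IsMatching M ∧ (I16 nb1 nb2 K).CourseComplete M ∧
        (I16 nb1 nb2 K).CoalitionStable noF M) := by
  have hfwd : (∃ f, GMaximal nb1 nb2 f ∧ GSize f ≤ K) →
      ∃ M : Finset (S16 n1 n2 × C16 n1 n2),
        (I16 nb1 nb2 K).IsMatching M ∧ (I16 nb1 nb2 K).CourseComplete M ∧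
        (I16 nb1 nb2 K).FirstCoalitionStable noF M := by
    rintro ⟨f, hgm, hsz⟩
    exact fwd_main nb1 nb2 K hnb hK hgm hsz
  have hbwd : (∃ M : Finset (S16 n1 n2 × C16 n1 n2),
        (I16 nb1 nb2 K).IsMatching M ∧ (I16 nb1 nb2 K).CourseComplete M ∧
        (I16 nb1 nb2 K).CoalitionStable noF M) →
      ∃ f, GMaximal nb1 nb2 f ∧ GSize f ≤ K := by
    rintro ⟨M, h1, h2, h3⟩
    exact bwd_main nb1 nb2 K hnb hK h1 h2 h3
  constructor
  · constructor
    · exact hfwd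
    · rintro ⟨M, h1, h2, h3⟩
      exact hbwd ⟨M, h1, h2, h3.coalitionStable⟩
  · constructor
    · intro h
      obtain ⟨M, h1, h2, h3⟩ := hfwd h
      exact ⟨M, h1, h2, h3.coalitionStable⟩
    · exact hbwd
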